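/- arXiv:2007.11433 — 11 statements merged into one kernel-verified Lean document; each statement's English description precedes it below -/
import Mathlib

section
/- Let d ≥ 2. The set 𝒞_d of d×d equal-input Markov matrices is convex, and it equals the convex hull of the d+2 matrices I, G_d, E₁, …, E_d, where E_i is the Markov matrix all of whose rows equal the standard basis vector e_i, and G_d = (1/(d-1))·(J - I) with J the all-ones matrix. Moreover, these d+2 matrices are exactly the extreme points of 𝒞_d. -/
open Matrix

/-- A Markov matrix: nonnegative entries, each row sums to 1. -/
def IsMarkov {d : ℕ} (M : Matrix (Fin d) (Fin d) ℝ) : Prop :=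
  (∀ i j, 0 ≤ M i j) ∧ ∀ i, ∑ j, M i j = 1

/-- An equal-input matrix: `M = (1-c)·I + C` with `C` nonnegative, with equal
rows, and with parameter sum `c`. -/
def IsEqualInput {d : ℕ} (M : Matrix (Fin d) (Fin d) ℝ) : Prop :=
  ∃ (c : ℝ) (C : Matrix (Fin d) (Fin d) ℝ),
    (∀ i j, 0 ≤ C i j) ∧ (∀ i i', C i = C i') ∧ (∀ i, ∑ j, C i j = c) ∧
    M = (1 - c) • (1 : Matrix (Fin d) (Fin d) ℝ) + C

/-- The set `𝒞_d` of equal-input Markov matrices. -/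
def equalInputSet (d : ℕ) : Set (Matrix (Fin d) (Fin d) ℝ) :=
  {M | IsMarkov M ∧ IsEqualInput M}

/-- `E_i`: the Markov matrix all of whose rows are the standard basis vector `e_i`. -/
def Ecol {d : ℕ} (i : Fin d) : Matrix (Fin d) (Fin d) ℝ :=
  Matrix.of fun _ j => if j = i then 1 else 0

/-- `G_d = (1/(d-1))·(J - I)` with `J` the all-ones matrix. -/
noncomputable def Gmat (d : ℕ) : Matrix (Fin d) (Fin d) ℝ :=
  ((d : ℝ) - 1)⁻¹ • ((Matrix.of fun _ _ => (1 : ℝ)) - 1)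

/-!
Write an equal-input matrix as `(1 - ∑ x) • 1 + C` where every row of `C` is `x ≥ 0`; it is
Markov iff its diagonal `1 - ∑ x + x i` is nonnegative. With `t = max (∑ x - 1) 0` it is the
convex combination `(1 - ∑ x + t) • 1 + (d - 1) t • G_d + ∑ j, (x j - t) • E_j`, so 𝒞_d is the
convex hull of `1`, `G_d` and the `E_j`. Each of these is extreme because 𝒞_d consists of
nonnegative matrices and each is the only member of 𝒞_d vanishing wherever it vanishes: off the
diagonal, on the diagonal (which forces `x i = 1 / (d - 1)`), or off the `j`-th column.
-/

theorem mem_extremePoints_of_unique_with_zeros {m n : Type*}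
    {A : Set (Matrix m n ℝ)} {M : Matrix m n ℝ} (hA : ∀ N ∈ A, ∀ i j, 0 ≤ N i j)
    (hM : M ∈ A) (hunique : ∀ N ∈ A, (∀ i j, M i j = 0 → N i j = 0) → N = M) :
    M ∈ A.extremePoints ℝ := by
  refine ⟨hM, fun N₁ h₁ N₂ h₂ ⟨a, b, ha, hb, _, hcomb⟩ =>
    hunique N₁ h₁ fun i j hij => ?_⟩
  have hsum : a * N₁ i j + b * N₂ i j = 0 := by
    rw [← hij, ← hcomb]
    rfl
  have := hA N₁ h₁ i j
  have := hA N₂ h₂ i j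
  nlinarith

theorem isMarkov_iff_mem_rowStochastic {d : ℕ} {M : Matrix (Fin d) (Fin d) ℝ} :
    IsMarkov M ↔ M ∈ rowStochastic ℝ (Fin d) :=
  mem_rowStochastic_iff_sum.symm

theorem IsMarkov.apply_eq_one_of_forall_ne {d : ℕ} {M : Matrix (Fin d) (Fin d) ℝ}
    (hM : IsMarkov M) {i k : Fin d} (h : ∀ j, j ≠ k → M i j = 0) : M i k = 1 := by
  rw [← hM.2 i, Finset.sum_eq_single k (fun j _ hj => h j hj) (by simp)]

theorem IsMarkov.eq_of_eq_zero_off_graph {d : ℕ} {M N : Matrix (Fin d) (Fin d) ℝ}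
    (hM : IsMarkov M) (hN : IsMarkov N) (f : Fin d → Fin d)
    (hMf : ∀ i j, j ≠ f i → M i j = 0) (hNf : ∀ i j, j ≠ f i → N i j = 0) : M = N := by
  ext i j
  by_cases h : j = f i
  · subst h
    rw [hM.apply_eq_one_of_forall_ne (hMf i), hN.apply_eq_one_of_forall_ne (hNf i)]
  · rw [hMf i j h, hNf i j h]

theorem convex_setOf_isEqualInput {d : ℕ} :
    Convex ℝ {M : Matrix (Fin d) (Fin d) ℝ | IsEqualInput M} := by
  rintro _ ⟨c, C, hC, hCrow, hCsum, rfl⟩ _ ⟨c', C', hC', hCrow', hCsum', rfl⟩ a b ha hb hab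
  refine ⟨a * c + b * c', a • C + b • C', fun i j => ?_, fun i i' => ?_, fun i => ?_, ?_⟩
  · have := hC i j; have := hC' i j
    simp only [Matrix.add_apply, Matrix.smul_apply, smul_eq_mul]
    positivity
  · funext j
    simp only [Matrix.add_apply, Matrix.smul_apply, congrFun (hCrow i i') j,
      congrFun (hCrow' i i') j]
  · simp only [Matrix.add_apply, Matrix.smul_apply, smul_eq_mul, Finset.sum_add_distrib,
      ← Finset.mul_sum, hCsum, hCsum']
  · obtain rfl : b = 1 - a := by linarith
    module

theorem convex_equalInputSet {d : ℕ} : Convex ℝ (equalInputSet d) := by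
  have hMarkov : {M : Matrix (Fin d) (Fin d) ℝ | IsMarkov M} = rowStochastic ℝ (Fin d) :=
    Set.ext fun _ => isMarkov_iff_mem_rowStochastic
  exact (hMarkov ▸ convex_rowStochastic).inter convex_setOf_isEqualInput

def equalInputMatrix {d : ℕ} (x : Fin d → ℝ) : Matrix (Fin d) (Fin d) ℝ :=
  (1 - ∑ j, x j) • 1 + of fun _ j => x j

theorem equalInputMatrix_apply {d : ℕ} (x : Fin d → ℝ) (i j : Fin d) :
    equalInputMatrix x i j = (if i = j then 1 - ∑ k, x k else 0) + x j := by
  by_cases h : i = j <;> simp [equalInputMatrix, one_apply, h]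

theorem IsEqualInput.exists_eq_equalInputMatrix {d : ℕ} {M : Matrix (Fin d) (Fin d) ℝ}
    (hM : IsEqualInput M) :
    ∃ x : Fin d → ℝ, (∀ j, 0 ≤ x j) ∧ M = equalInputMatrix x := by
  obtain ⟨c, C, hC, hCrow, hCsum, rfl⟩ := hM
  cases isEmpty_or_nonempty (Fin d) with
  | inl _ => exact ⟨0, fun j => isEmptyElim j, Subsingleton.elim _ _⟩
  | inr h =>
    obtain ⟨i₀⟩ := h
    refine ⟨C i₀, hC i₀, ?_⟩
    ext i j
    rw [equalInputMatrix_apply, hCsum i₀, ← congrFun (hCrow i i₀) j]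
    by_cases h : i = j <;> simp [one_apply, h]

theorem equalInputMatrix_mem_equalInputSet {d : ℕ} {x : Fin d → ℝ} (hx : ∀ j, 0 ≤ x j)
    (hdiag : ∀ i, 0 ≤ 1 - ∑ k, x k + x i) : equalInputMatrix x ∈ equalInputSet d := by
  refine ⟨⟨fun i j => ?_, fun i => ?_⟩, ∑ k, x k, of fun _ j => x j,
    fun _ j => hx j, fun _ _ => rfl, fun _ => rfl, rfl⟩
  · rw [equalInputMatrix_apply]
    by_cases h : i = j
    · subst h; simpa using hdiag i
    · simpa [h] using hx j
  · simp [equalInputMatrix_apply, Finset.sum_add_distrib]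

theorem Gmat_apply {d : ℕ} (i j : Fin d) :
    Gmat d i j = if i = j then 0 else ((d : ℝ) - 1)⁻¹ := by
  by_cases h : i = j <;> simp [Gmat, one_apply, h]

theorem one_eq_equalInputMatrix {d : ℕ} :
    (1 : Matrix (Fin d) (Fin d) ℝ) = equalInputMatrix 0 := by
  ext i j
  simp [equalInputMatrix_apply, one_apply]

theorem Ecol_eq_equalInputMatrix {d : ℕ} (k : Fin d) :
    Ecol k = equalInputMatrix (Pi.single k 1) := by
  ext i j
  by_cases h : i = j <;> simp [Ecol, equalInputMatrix_apply, Pi.single_apply, h]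

theorem Gmat_eq_equalInputMatrix {d : ℕ} (hd : 2 ≤ d) :
    Gmat d = equalInputMatrix fun _ => ((d : ℝ) - 1)⁻¹ := by
  have hd1 : (d : ℝ) - 1 ≠ 0 := by
    have : (2 : ℝ) ≤ d := by exact_mod_cast hd
    linarith
  ext i j
  by_cases h : i = j
  · simp only [h, Gmat_apply, ↓reduceIte, equalInputMatrix_apply, Finset.sum_const,
      Finset.card_univ, Fintype.card_fin, nsmul_eq_mul]
    field_simp
    ring
  · simp [Gmat_apply, equalInputMatrix_apply, h]

theorem Gmat_mem_equalInputSet {d : ℕ} (hd : 2 ≤ d) : Gmat d ∈ equalInputSet d := by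
  have hd1 : (1 : ℝ) < d := by exact_mod_cast hd
  have hd1' : (d : ℝ) - 1 ≠ 0 := by linarith
  rw [Gmat_eq_equalInputMatrix hd]
  refine equalInputMatrix_mem_equalInputSet (fun _ => by positivity) fun _ => le_of_eq ?_
  simp only [Finset.sum_const, Finset.card_univ, Fintype.card_fin, nsmul_eq_mul]
  field_simp
  ring

theorem eq_Gmat_of_diag_eq_zero {d : ℕ} (hd : 2 ≤ d) {N : Matrix (Fin d) (Fin d) ℝ}
    (hN : N ∈ equalInputSet d) (hdiag : ∀ i, N i i = 0) : N = Gmat d := by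
  obtain ⟨x, -, rfl⟩ := hN.2.exists_eq_equalInputMatrix
  have hx (i : Fin d) : x i = ∑ k, x k - 1 := by
    have := hdiag i
    rw [equalInputMatrix_apply, if_pos rfl] at this
    linarith
  have hsum : ∑ k, x k = d * (∑ k, x k - 1) := by
    simpa only [Finset.sum_const, Finset.card_univ, Fintype.card_fin, nsmul_eq_mul] using
      Finset.sum_congr rfl fun i (_ : i ∈ Finset.univ) => hx i
  have hval : ∑ k, x k - 1 = ((d : ℝ) - 1)⁻¹ :=
    eq_inv_of_mul_eq_one_left (by linear_combination -hsum)
  rw [Gmat_eq_equalInputMatrix hd]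
  congr
  funext i
  rw [hx i, hval]

noncomputable def equalInputVertex (d : ℕ) :
    Option (Option (Fin d)) → Matrix (Fin d) (Fin d) ℝ
  | none => 1
  | some none => Gmat d
  | some (some k) => Ecol k

theorem range_equalInputVertex (d : ℕ) :
    Set.range (equalInputVertex d) =
      insert 1 (insert (Gmat d) (Set.range (Ecol (d := d)))) := by
  rw [Option.range_eq, Option.range_eq]
  rfl

theorem trace_Gmat (d : ℕ) : trace (Gmat d) = 0 := by
  simp [trace, Gmat_apply]

theorem trace_Ecol {d : ℕ} (k : Fin d) : trace (Ecol k) = 1 := by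
  simp [trace, Ecol]

theorem Ecol_injective {d : ℕ} : Function.Injective (Ecol (d := d)) := by
  intro i j h
  simpa [Ecol] using congrFun (congrFun h i) i

theorem equalInputVertex_injective {d : ℕ} (hd : 2 ≤ d) :
    Function.Injective (equalInputVertex d) := by
  rintro (_ | _ | i) (_ | _ | j) h
  -- the traces `d`, `0`, `1` of `1`, `G_d`, `E_k` tell the three kinds apart
  all_goals first
    | rfl
    | exact congrArg (some ∘ some) (Ecol_injective h)
    | have htrace := congrArg trace h
      simp only [equalInputVertex, trace_one, Fintype.card_fin, trace_Gmat, trace_Ecol] at htrace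
      norm_cast at htrace <;> omega

def vertexWeight {d : ℕ} (x : Fin d → ℝ) (t : ℝ) : Option (Option (Fin d)) → ℝ
  | none => 1 - ∑ k, x k + t
  | some none => ((d : ℝ) - 1) * t
  | some (some k) => x k - t

theorem sum_vertexWeight {d : ℕ} (x : Fin d → ℝ) (t : ℝ) :
    ∑ o, vertexWeight x t o = 1 := by
  simp only [Fintype.sum_option, vertexWeight, Finset.sum_sub_distrib, Finset.sum_const,
    Finset.card_univ, Fintype.card_fin, nsmul_eq_mul]
  ring

theorem sum_vertexWeight_smul {d : ℕ} (hd : 2 ≤ d) (x : Fin d → ℝ) (t : ℝ) :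
    ∑ o, vertexWeight x t o • equalInputVertex d o = equalInputMatrix x := by
  have hd1 : (d : ℝ) - 1 ≠ 0 := by
    have : (2 : ℝ) ≤ d := by exact_mod_cast hd
    linarith
  ext i j
  simp only [Matrix.sum_apply, Fintype.sum_option, vertexWeight, equalInputVertex,
    Matrix.smul_apply, smul_eq_mul, Gmat_apply, Ecol, Matrix.of_apply, one_apply, mul_ite,
    mul_one, mul_zero, Finset.sum_ite_eq, Finset.mem_univ, if_true, equalInputMatrix_apply]
  by_cases h : i = j
  · simp [h]
  · simp only [h, if_false]
    field_simp
    ring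

theorem equalInputSet_subset_convexHull {d : ℕ} (hd : 2 ≤ d) :
    equalInputSet d ⊆ convexHull ℝ (Set.range (equalInputVertex d)) := by
  rintro _ ⟨hMarkov, hEqualInput⟩
  obtain ⟨x, hx, rfl⟩ := hEqualInput.exists_eq_equalInputMatrix
  have hdiag (i : Fin d) : 0 ≤ 1 - ∑ k, x k + x i := by
    simpa [equalInputMatrix_apply] using hMarkov.1 i i
  set t := max (∑ k, x k - 1) 0
  have hd1 : (1 : ℝ) ≤ d := by exact_mod_cast (by omega : 1 ≤ d)
  have hweight : ∀ o, 0 ≤ vertexWeight x t o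
    | none => by simp only [vertexWeight]; linarith [le_max_left (∑ k, x k - 1) 0]
    | some none => mul_nonneg (by linarith) (le_max_right _ _)
    | some (some k) => sub_nonneg.2 (max_le (by linarith [hdiag k]) (hx k))
  rw [← sum_vertexWeight_smul hd x t]
  exact (convex_convexHull ℝ _).sum_mem (fun o _ => hweight o) (sum_vertexWeight x t)
    fun o _ => subset_convexHull ℝ _ (Set.mem_range_self o)

theorem equalInputVertex_mem_equalInputSet {d : ℕ} (hd : 2 ≤ d) :
    ∀ o, equalInputVertex d o ∈ equalInputSet d
  | none => by
    rw [equalInputVertex, one_eq_equalInputMatrix]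
    exact equalInputMatrix_mem_equalInputSet (fun _ => le_rfl) fun _ => by simp
  | some none => Gmat_mem_equalInputSet hd
  | some (some k) => by
    rw [equalInputVertex, Ecol_eq_equalInputMatrix]
    refine equalInputMatrix_mem_equalInputSet (fun j => ?_) fun i => ?_
    · by_cases h : j = k <;> simp [h]
    · by_cases h : i = k <;> simp [Pi.single_apply, h]

theorem equalInputVertex_mem_extremePoints {d : ℕ} (hd : 2 ≤ d) (o : Option (Option (Fin d))) :
    equalInputVertex d o ∈ (equalInputSet d).extremePoints ℝ := by
  have hV := equalInputVertex_mem_equalInputSet hd o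
  refine mem_extremePoints_of_unique_with_zeros (fun N hN => hN.1.1) hV fun N hN hzero => ?_
  rcases o with _ | _ | k
  · refine hN.1.eq_of_eq_zero_off_graph hV.1 id (fun i j hj => hzero i j ?_) fun i j hj => ?_ <;>
      simpa [equalInputVertex, one_apply, eq_comm] using hj
  · exact eq_Gmat_of_diag_eq_zero hd hN fun i => hzero i i (by simp [equalInputVertex, Gmat_apply])
  · refine hN.1.eq_of_eq_zero_off_graph hV.1 (fun _ => k) (fun i j hj => hzero i j ?_)
      fun i j hj => ?_ <;> simp [equalInputVertex, Ecol, hj]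

/-- `𝒞_d` is convex, equals the convex hull of the `d+2` matrices
`I, G_d, E₁, …, E_d`, and these are exactly its extreme points. -/
theorem stmt_3 {d : ℕ} (hd : 2 ≤ d) :
    Convex ℝ (equalInputSet d) ∧
    equalInputSet d =
      convexHull ℝ (insert (1 : Matrix (Fin d) (Fin d) ℝ)
        (insert (Gmat d) (Set.range (Ecol (d := d))))) ∧
    Set.extremePoints ℝ (equalInputSet d) =
      insert (1 : Matrix (Fin d) (Fin d) ℝ)
        (insert (Gmat d) (Set.range (Ecol (d := d)))) ∧
    (insert (1 : Matrix (Fin d) (Fin d) ℝ)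
        (insert (Gmat d) (Set.range (Ecol (d := d))))).ncard = d + 2 := by
  rw [← range_equalInputVertex]
  have hhull : equalInputSet d = convexHull ℝ (Set.range (equalInputVertex d)) :=
    (equalInputSet_subset_convexHull hd).antisymm <| convexHull_min
      (Set.range_subset_iff.2 (equalInputVertex_mem_equalInputSet hd)) convex_equalInputSet
  refine ⟨convex_equalInputSet, hhull, ?_, ?_⟩
  · refine (hhull ▸ extremePoints_convexHull_subset).antisymm ?_
    exact Set.range_subset_iff.2 (equalInputVertex_mem_extremePoints hd)
  · rw [Set.ncard_range_of_injective (equalInputVertex_injective hd)]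
    simp
end

section
/- Let d ≥ 2 and let M = (1-c)·I + C be a d×d equal-input Markov matrix with summatory parameter c. Then there exists an equal-input Markov generator Q with exp(Q) = M if and only if 0 ≤ c < 1. In that case, for 0 < c < 1 one may take Q = -(log(1-c)/c)·(M - I), and for c = 0 one has Q = 0. -/
open Matrix

/-- An equal-input generator: `Q = C - c·I` with `C` nonnegative with equal
rows and row sums `c`. -/
def IsEqualInputGen {d : ℕ} (Q : Matrix (Fin d) (Fin d) ℝ) : Prop :=
  ∃ (c : ℝ) (C : Matrix (Fin d) (Fin d) ℝ),
    (∀ i j, 0 ≤ C i j) ∧ (∀ i i', C i = C i') ∧ (∀ i, ∑ j, C i j = c) ∧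
    Q = C - c • (1 : Matrix (Fin d) (Fin d) ℝ)

/-!
If `C` has equal rows summing to `c`, then `E = C - c • 1` satisfies `E * E = -c • E`, so
`exp (t • E) = 1 + ((1 - exp (-t c)) / c) • E`. Thus the exponential of an equal-input generator
with parameter `c'` is the identity plus an equal-input matrix with parameter `1 - exp (-c') < 1`;
conversely, for `0 < c < 1` the scaling `t = -log (1 - c) / c` solves `1 - exp (-t c) = c`.
Since `d ≥ 2`, the parameter of `C - c • 1` is read off its off-diagonal entries.
-/

open Nat in
theorem Real.hasSum_inv_factorial_succ_mul_pow {a : ℝ} (ha : a ≠ 0) :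
    HasSum (fun k : ℕ => ((k + 1)! : ℝ)⁻¹ * a ^ k) ((Real.exp a - 1) / a) := by
  have hexp : HasSum (fun k : ℕ => (k ! : ℝ)⁻¹ * a ^ k) (Real.exp a) := by
    simpa [Real.exp_eq_exp_ℝ] using NormedSpace.exp_series_hasSum_exp' (𝕂 := ℝ) a
  have hshift : HasSum (fun k : ℕ => ((k + 1)! : ℝ)⁻¹ * a ^ (k + 1)) (Real.exp a - 1) := by
    simpa using (hasSum_nat_add_iff' 1).2 hexp
  have hterm : (fun k : ℕ => ((k + 1)! : ℝ)⁻¹ * a ^ k) =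
      fun k => ((k + 1)! : ℝ)⁻¹ * a ^ (k + 1) * a⁻¹ := by
    funext k
    rw [pow_succ]
    field_simp
  rw [hterm, div_eq_mul_inv]
  exact hshift.mul_right a⁻¹

open Nat in
theorem NormedSpace.exp_eq_one_add_smul_of_mul_self_eq_smul {𝔸 : Type*} [Ring 𝔸] [Algebra ℝ 𝔸]
    [TopologicalSpace 𝔸] [IsTopologicalRing 𝔸] [ContinuousSMul ℝ 𝔸] [T2Space 𝔸]
    {A : 𝔸} {a : ℝ} (ha : a ≠ 0) (hA : A * A = a • A) :
    NormedSpace.exp A = 1 + ((Real.exp a - 1) / a) • A := by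
  have hpow : ∀ k : ℕ, A ^ (k + 1) = a ^ k • A := by
    intro k
    induction k with
    | zero => simp
    | succ k ih => rw [pow_succ, ih, smul_mul_assoc, hA, smul_smul, pow_succ]
  have htail : HasSum (fun k : ℕ => ((k + 1)! : ℝ)⁻¹ • A ^ (k + 1))
      (((Real.exp a - 1) / a) • A) := by
    convert (Real.hasSum_inv_factorial_succ_mul_pow ha).smul_const A using 2 with k
    rw [hpow, smul_smul]
  have hseries : HasSum (fun k : ℕ => (k ! : ℝ)⁻¹ • A ^ k) (1 + ((Real.exp a - 1) / a) • A) :=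
    (hasSum_nat_add_iff' 1).1 (by simpa using htail)
  rw [NormedSpace.exp_eq_tsum ℝ]
  exact hseries.tsum_eq

namespace Matrix

variable {n : Type*} [Fintype n] {C C' : Matrix n n ℝ} {v v' : n → ℝ} {c c' : ℝ}

theorem mul_self_eq_smul_of_forall_row_eq (hC : ∀ i, C i = v) (hc : ∑ j, v j = c) :
    C * C = c • C := by
  ext i j
  simp only [mul_apply, smul_apply, smul_eq_mul, hC, ← Finset.sum_mul, hc]

variable [DecidableEq n]

theorem sub_smul_one_mul_self_of_forall_row_eq (hC : ∀ i, C i = v) (hc : ∑ j, v j = c) :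
    (C - c • 1) * (C - c • 1) = (-c) • (C - c • 1) := by
  simp only [sub_mul, mul_sub, mul_self_eq_smul_of_forall_row_eq hC hc, Matrix.mul_smul,
    Matrix.smul_mul, one_mul, mul_one]
  module

/-- The off-diagonal entries of `C - c • 1` are the common row of `C`, hence determine `c`. -/
theorem eq_of_sub_smul_one_eq [Nontrivial n] (hC : ∀ i, C i = v) (hc : ∑ j, v j = c)
    (hC' : ∀ i, C' i = v') (hc' : ∑ j, v' j = c') (h : C - c • 1 = C' - c' • 1) : c = c' := by
  have hv : v = v' := by
    funext j
    obtain ⟨i, hij⟩ := exists_ne j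
    simpa [hC, hC', one_apply_ne hij] using congrFun (congrFun h i) j
  rw [← hc, ← hc', hv]

theorem exp_neg_log_one_sub_div_smul_sub_smul_one (hC : ∀ i, C i = v) (hc : ∑ j, v j = c)
    (hc0 : 0 < c) (hc1 : c < 1) :
    NormedSpace.exp ((-Real.log (1 - c) / c) • (C - c • 1)) = 1 + (C - c • 1) := by
  set t := -Real.log (1 - c) / c with ht
  have hlog : Real.log (1 - c) < 0 := Real.log_neg (by linarith) (by linarith)
  have htc : t * c = -Real.log (1 - c) := div_mul_cancel₀ _ hc0.ne'
  have hsq : (t • (C - c • 1)) * (t • (C - c • 1)) = (-(t * c)) • (t • (C - c • 1)) := by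
    rw [Matrix.smul_mul, Matrix.mul_smul, sub_smul_one_mul_self_of_forall_row_eq hC hc]
    module
  rw [NormedSpace.exp_eq_one_add_smul_of_mul_self_eq_smul (by linarith) hsq, htc, neg_neg,
    Real.exp_log (by linarith), smul_smul, ht]
  congr 1
  convert one_smul ℝ (C - c • 1) using 2
  field_simp [hlog.ne]
  ring

end Matrix

variable {d : ℕ}

theorem isEqualInputGen_zero : IsEqualInputGen (0 : Matrix (Fin d) (Fin d) ℝ) :=
  ⟨0, 0, fun _ _ => le_rfl, fun _ _ => rfl, fun _ => by simp, by simp⟩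

theorem isEqualInputGen_sub_smul_one {C : Matrix (Fin d) (Fin d) ℝ} {v : Fin d → ℝ} {c : ℝ}
    (hC0 : ∀ i j, 0 ≤ C i j) (hC : ∀ i, C i = v) (hc : ∑ j, v j = c) :
    IsEqualInputGen (C - c • 1) :=
  ⟨c, C, hC0, fun i i' => by rw [hC, hC], fun i => by rw [hC, hc], rfl⟩

theorem IsEqualInputGen.smul {Q : Matrix (Fin d) (Fin d) ℝ} (hQ : IsEqualInputGen Q) {t : ℝ}
    (ht : 0 ≤ t) : IsEqualInputGen (t • Q) := by
  obtain ⟨c, C, hC0, hrows, hsum, rfl⟩ := hQ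
  refine ⟨t * c, t • C, fun i j => mul_nonneg ht (hC0 i j),
    fun i i' => funext fun j => by simp [congrFun (hrows i i') j],
    fun i => by simp [← Finset.mul_sum, hsum], ?_⟩
  module

theorem IsEqualInputGen.lt_one_of_exp_eq [Nontrivial (Fin d)] {Q C : Matrix (Fin d) (Fin d) ℝ}
    {v : Fin d → ℝ} {c : ℝ} (hQ : IsEqualInputGen Q) (hC : ∀ i, C i = v) (hc : ∑ j, v j = c)
    (hexp : NormedSpace.exp Q = 1 + (C - c • 1)) : c < 1 := by
  obtain ⟨c', C', hC'0, hC'rows, hC'sum, rfl⟩ := hQ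
  obtain ⟨i₀⟩ := (inferInstance : Nonempty (Fin d))
  have hc'0 : 0 ≤ c' := hC'sum i₀ ▸ Finset.sum_nonneg fun j _ => hC'0 i₀ j
  obtain ⟨g, hgQ, hg⟩ : ∃ g : ℝ, C - c • 1 = g • (C' - c' • 1) ∧ g * c' = 1 - Real.exp (-c') := by
    rcases hc'0.eq_or_lt with rfl | hc'pos
    · have hC' : C' = 0 := by
        ext i j
        exact (Finset.sum_eq_zero_iff_of_nonneg fun j _ => hC'0 i j).1 (hC'sum i) j
          (Finset.mem_univ j)
      refine ⟨0, ?_, by simp⟩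
      simpa [hC'] using hexp.symm
    · refine ⟨(Real.exp (-c') - 1) / -c', ?_, by field_simp; ring⟩
      rw [NormedSpace.exp_eq_one_add_smul_of_mul_self_eq_smul (neg_ne_zero.2 hc'pos.ne')
        (sub_smul_one_mul_self_of_forall_row_eq (fun i => hC'rows i i₀) (hC'sum i₀))] at hexp
      exact (add_left_cancel hexp).symm
  have hcg : c = g * c' := by
    refine eq_of_sub_smul_one_eq hC hc (C' := g • C') (v' := g • C' i₀)
      (fun i => funext fun j => by simp [congrFun (hC'rows i i₀) j])
      (by simp [← Finset.mul_sum, hC'sum i₀]) ?_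
    rw [hgQ]
    module
  linarith [Real.exp_pos (-c')]

theorem stmt_4_general {d : ℕ} (hd : 2 ≤ d)
    (cvec : Fin d → ℝ)
    (C : Matrix (Fin d) (Fin d) ℝ) (hC : ∀ i, C i = cvec)
    (hCnonneg : ∀ i j, 0 ≤ C i j)
    (c : ℝ) (hc : c = ∑ j, cvec j)
    (M : Matrix (Fin d) (Fin d) ℝ)
    (hM : M = (1 - c) • (1 : Matrix (Fin d) (Fin d) ℝ) + C) :
    ((∃ Q : Matrix (Fin d) (Fin d) ℝ, IsEqualInputGen Q ∧ NormedSpace.exp Q = M)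
        ↔ (0 ≤ c ∧ c < 1)) ∧
    (0 < c → c < 1 →
      IsEqualInputGen ((-(Real.log (1 - c)) / c) • (M - 1)) ∧
      NormedSpace.exp ((-(Real.log (1 - c)) / c) • (M - 1)) = M) ∧
    (c = 0 → NormedSpace.exp (0 : Matrix (Fin d) (Fin d) ℝ) = M) := by
  have : Nontrivial (Fin d) := Fin.nontrivial_iff_two_le.2 hd
  have hcvec : ∀ j, 0 ≤ cvec j := fun j => hC ⟨0, by omega⟩ ▸ hCnonneg _ j
  have hc0 : 0 ≤ c := hc ▸ Finset.sum_nonneg fun j _ => hcvec j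
  have hMsub : M - 1 = C - c • 1 := by rw [hM]; module
  have hM' : M = 1 + (C - c • 1) := by rw [← hMsub]; abel
  have hM1 : c = 0 → M = 1 := by
    rintro rfl
    have hcvec0 : cvec = 0 := funext fun j =>
      (Finset.sum_eq_zero_iff_of_nonneg fun j _ => hcvec j).1 hc.symm j (Finset.mem_univ j)
    have hC0 : C = 0 := funext fun i => (hC i).trans hcvec0
    rw [hM, hC0]
    simp
  have hexplicit : 0 < c → c < 1 →
      IsEqualInputGen ((-(Real.log (1 - c)) / c) • (M - 1)) ∧
      NormedSpace.exp ((-(Real.log (1 - c)) / c) • (M - 1)) = M := fun hpos hlt => by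
    have ht : 0 ≤ -Real.log (1 - c) / c :=
      div_nonneg (neg_nonneg.2 (Real.log_nonpos (by linarith) (by linarith))) hpos.le
    rw [hMsub]
    exact ⟨(isEqualInputGen_sub_smul_one hCnonneg hC hc.symm).smul ht,
      (exp_neg_log_one_sub_div_smul_sub_smul_one hC hc.symm hpos hlt).trans hM'.symm⟩
  refine ⟨⟨fun ⟨Q, hQ, hexp⟩ => ⟨hc0, hQ.lt_one_of_exp_eq hC hc.symm (hexp.trans hM')⟩,
    fun ⟨_, hlt⟩ => ?_⟩, hexplicit, fun h => by rw [NormedSpace.exp_zero, hM1 h]⟩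
  rcases hc0.eq_or_lt with h | h
  · exact ⟨0, isEqualInputGen_zero, by rw [NormedSpace.exp_zero, hM1 h.symm]⟩
  · exact ⟨_, hexplicit h hlt⟩

/-- an equal-input Markov matrix is embeddable via an equal-input
generator iff `0 ≤ c < 1`; in that case one may take
`Q = -(log(1-c)/c)·(M - I)` (and `Q = 0` when `c = 0`). -/
theorem stmt_4 {d : ℕ} (hd : 2 ≤ d)
    (cvec : Fin d → ℝ)
    (C : Matrix (Fin d) (Fin d) ℝ) (hC : ∀ i, C i = cvec)
    (hCnonneg : ∀ i j, 0 ≤ C i j)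
    (c : ℝ) (hc : c = ∑ j, cvec j)
    (M : Matrix (Fin d) (Fin d) ℝ)
    (hM : M = (1 - c) • (1 : Matrix (Fin d) (Fin d) ℝ) + C)
    (hMarkov : IsMarkov M) :
    ((∃ Q : Matrix (Fin d) (Fin d) ℝ, IsEqualInputGen Q ∧ NormedSpace.exp Q = M)
        ↔ (0 ≤ c ∧ c < 1)) ∧
    (0 < c → c < 1 →
      IsEqualInputGen ((-(Real.log (1 - c)) / c) • (M - 1)) ∧
      NormedSpace.exp ((-(Real.log (1 - c)) / c) • (M - 1)) = M) ∧
    (c = 0 → NormedSpace.exp (0 : Matrix (Fin d) (Fin d) ℝ) = M) :=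
  stmt_4_general hd cvec C hC hCnonneg c hc M hM
end

section
/- Let d ≥ 2 and let Q and Q′ be d×d equal-input Markov generators. If exp(Q) = exp(Q′), then Q = Q′. In other words, an equal-input embedding of a Markov matrix is unique among equal-input generators. -/
/-!
An equal-input generator `Q = C - c • 1` satisfies `Q * Q = -c • Q`, since `C` has equal rows
with sum `c`. For any `A` with `A * A = a • A` the exponential series collapses to
`exp A = 1 + φ(a) • A` with `φ(a) = (exp a - 1) / a`, which never vanishes on `ℝ`. Then
`N = exp A - 1` satisfies `N * N = (exp a - 1) • N`, so `N` determines `exp a`, hence `a`,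
hence `A = φ(a)⁻¹ • N`, unless `N = 0`, in which case `A = 0`.
-/

open Matrix Nat

/-- `(exp a - 1) / a`, with its removable singularity at `a = 0` filled in by `1`. -/
noncomputable def Real.expSubOneDiv (a : ℝ) : ℝ := ∑' n : ℕ, a ^ n / (n + 1)!

namespace Real

theorem summable_pow_div_factorial_succ (a : ℝ) : Summable fun n : ℕ => a ^ n / (n + 1)! := by
  refine .of_norm_bounded (summable_pow_div_factorial |a|) fun n => ?_
  rw [norm_div, norm_pow, norm_eq_abs, norm_natCast]
  gcongr
  exact n.le_succ

theorem mul_expSubOneDiv (a : ℝ) : a * expSubOneDiv a = exp a - 1 := by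
  have hexp : HasSum (fun n : ℕ => a ^ (n + 1) / (n + 1)!) (exp a - 1) := by
    simpa [exp_eq_exp_ℝ] using
      (hasSum_nat_add_iff' 1).2 (NormedSpace.expSeries_div_hasSum_exp a)
  refine ((summable_pow_div_factorial_succ a).hasSum.mul_left a).unique ?_
  simpa only [_root_.pow_succ', mul_div_assoc] using hexp

theorem expSubOneDiv_ne_zero (a : ℝ) : expSubOneDiv a ≠ 0 := by
  intro h
  have ha : a = 0 := by
    simpa [h, sub_eq_zero, exp_eq_one_iff] using (mul_expSubOneDiv a).symm
  subst ha
  rw [expSubOneDiv, tsum_eq_single 0 fun n hn => by simp [zero_pow hn]] at h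
  simp at h

end Real

section QuadraticElements

variable {𝔸 : Type*} [Ring 𝔸] [Algebra ℝ 𝔸] {A B : 𝔸} {a b : ℝ}

theorem pow_succ_eq_pow_smul_of_mul_self_eq_smul (h : A * A = a • A) (n : ℕ) :
    A ^ (n + 1) = a ^ n • A := by
  induction n with
  | zero => simp
  | succ n ih => rw [pow_succ, ih, smul_mul_assoc, h, smul_smul, ← pow_succ]

theorem expSubOneDiv_smul_mul_self (h : A * A = a • A) :
    (Real.expSubOneDiv a • A) * (Real.expSubOneDiv a • A) =
      (Real.exp a - 1) • (Real.expSubOneDiv a • A) := by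
  rw [smul_mul_smul, h, smul_smul, smul_smul, ← Real.mul_expSubOneDiv]
  ring_nf

variable [TopologicalSpace 𝔸] [IsTopologicalRing 𝔸] [T2Space 𝔸] [ContinuousSMul ℝ 𝔸]

theorem exp_eq_one_add_smul_of_mul_self_eq_smul (h : A * A = a • A) :
    NormedSpace.exp A = 1 + Real.expSubOneDiv a • A := by
  have hsum : HasSum (fun n : ℕ => (n ! : ℝ)⁻¹ • A ^ n) (1 + Real.expSubOneDiv a • A) := by
    refine (hasSum_nat_add_iff' 1).1 ?_
    simpa [Real.expSubOneDiv, pow_succ_eq_pow_smul_of_mul_self_eq_smul h, smul_smul,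
      div_eq_inv_mul] using
      (Real.summable_pow_div_factorial_succ a).hasSum.smul_const A
  exact congrFun (NormedSpace.exp_eq_tsum ℝ) A ▸ hsum.tsum_eq

theorem eq_of_exp_eq_of_mul_self_eq_smul (hA : A * A = a • A) (hB : B * B = b • B)
    (hexp : NormedSpace.exp A = NormedSpace.exp B) : A = B := by
  set N := NormedSpace.exp A - 1
  have hNA : N = Real.expSubOneDiv a • A := by
    simp [N, exp_eq_one_add_smul_of_mul_self_eq_smul hA]
  have hNB : N = Real.expSubOneDiv b • B := by
    simp [N, hexp, exp_eq_one_add_smul_of_mul_self_eq_smul hB]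
  have hNNa : N * N = (Real.exp a - 1) • N := by
    rw [hNA]; exact expSubOneDiv_smul_mul_self hA
  have hNNb : N * N = (Real.exp b - 1) • N := by
    rw [hNB]; exact expSubOneDiv_smul_mul_self hB
  have hzero : (Real.exp a - Real.exp b) • N = 0 := by
    rw [← sub_sub_sub_cancel_right _ _ 1, sub_smul, ← hNNa, ← hNNb, sub_self]
  rcases smul_eq_zero.1 hzero with hab | hN
  · obtain rfl : a = b := Real.exp_injective (sub_eq_zero.1 hab)
    exact smul_right_injective 𝔸 (Real.expSubOneDiv_ne_zero a) (hNA.symm.trans hNB)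
  · rw [hN, eq_comm, smul_eq_zero] at hNA hNB
    rw [hNA.resolve_left (Real.expSubOneDiv_ne_zero a),
      hNB.resolve_left (Real.expSubOneDiv_ne_zero b)]

end QuadraticElements

theorem IsEqualInputGen.mul_self_eq_smul {d : ℕ} {Q : Matrix (Fin d) (Fin d) ℝ}
    (hQ : IsEqualInputGen Q) : ∃ c : ℝ, Q * Q = c • Q := by
  obtain ⟨c, C, -, hrows, hsums, rfl⟩ := hQ
  have hCC : C * C = c • C := by
    ext i j
    simp only [mul_apply, Matrix.smul_apply, smul_eq_mul]
    simp_rw [hrows _ i, ← Finset.sum_mul, hsums]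
  refine ⟨-c, ?_⟩
  simp only [sub_mul, mul_sub, hCC, Matrix.mul_smul, Matrix.smul_mul, Matrix.mul_one,
    Matrix.one_mul, smul_smul]
  module

theorem stmt_5_general {d : ℕ}
    (Q Q' : Matrix (Fin d) (Fin d) ℝ)
    (hQ : IsEqualInputGen Q) (hQ' : IsEqualInputGen Q')
    (hexp : NormedSpace.exp Q = NormedSpace.exp Q') :
    Q = Q' := by
  obtain ⟨c, hc⟩ := hQ.mul_self_eq_smul
  obtain ⟨c', hc'⟩ := hQ'.mul_self_eq_smul
  exact eq_of_exp_eq_of_mul_self_eq_smul hc hc' hexp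

/-- uniqueness of equal-input embeddings — two equal-input
generators with the same matrix exponential coincide. -/
theorem stmt_5 {d : ℕ} (hd : 2 ≤ d)
    (Q Q' : Matrix (Fin d) (Fin d) ℝ)
    (hQ : IsEqualInputGen Q) (hQ' : IsEqualInputGen Q')
    (hexp : NormedSpace.exp Q = NormedSpace.exp Q') :
    Q = Q' :=
  stmt_5_general Q Q' hQ hQ' hexp
end

section
/- Let d ≥ 1. The set of monotone d×d Markov matrices is convex, and its extreme points are exactly the monotone Markov matrices all of whose entries lie in {0,1}; there are exactly binom(2d-1, d) such matrices. Equivalently, every monotone Markov matrix is a convex combination of the matrices E_{ℓ₁,…,ℓ_d} with 1 ≤ ℓ₁ ≤ ℓ₂ ≤ … ≤ ℓ_d ≤ d, where E_{ℓ₁,…,ℓ_d} is the Markov matrix whose i-th row is the standard basis vector e_{ℓ_i}. -/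
open Matrix

/-- A (row-)monotone matrix: the tail sums of the rows increase with the
row index. -/
def IsMonotone {d : ℕ} (M : Matrix (Fin d) (Fin d) ℝ) : Prop :=
  ∀ i j : Fin d, i ≤ j → ∀ m : Fin d,
    ∑ k ∈ Finset.Ici m, M i k ≤ ∑ k ∈ Finset.Ici m, M j k

/-- `E_{ℓ₁,…,ℓ_d}`: the `{0,1}` Markov matrix whose `i`-th row is the standard
basis vector `e_{ℓ i}`. -/
def Erow {d : ℕ} (ℓ : Fin d → Fin d) : Matrix (Fin d) (Fin d) ℝ :=
  Matrix.of fun i j => if j = ℓ i then 1 else 0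

/-!
A monotone matrix `M` with nonnegative entries and all row sums equal to `s` can be peeled:
let `ℓ i` be the last column in the support of row `i`. Comparing tail sums shows that `ℓ` is
monotone, and subtracting `c • E_ℓ` with `c = minᵢ M i (ℓ i)` keeps the entries nonnegative and
the matrix monotone, lowers the row sums to `s - c` and kills at least one entry. Induction on
the size of the support gives `M ∈ s • conv {E_ℓ | ℓ monotone}`; working with arbitrary row sums
`s` avoids renormalising after each step. Each `E_ℓ` is extreme already among all Markov
matrices, and extreme points of a convex hull lie in the generating set. Finally, monotone maps
`Fin d → Fin d` correspond to their multisets of values, of which there are `binom(2d-1, d)`.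
-/

open Finset
open scoped Pointwise

section MonotoneTuples

variable {α : Type*} [LinearOrder α] {k : ℕ}

theorem Monotone.eq_of_coe_ofFn_eq {f g : Fin k → α} (hf : Monotone f) (hg : Monotone g)
    (h : (List.ofFn f : Multiset α) = List.ofFn g) : f = g :=
  List.ofFn_injective <| (Multiset.coe_eq_coe.1 h).eq_of_sortedLE hf.sortedLE_ofFn hg.sortedLE_ofFn

theorem Sym.exists_monotone_coe_ofFn_eq (s : Sym α k) :
    ∃ f : Fin k → α, Monotone f ∧ (List.ofFn f : Multiset α) = s := by
  set l := (s : Multiset α).sort (· ≤ ·)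
  have hlen : l.length = k := by rw [Multiset.length_sort, Sym.card_coe]
  refine ⟨fun i => l.get (i.cast hlen.symm), ?_, ?_⟩
  · exact fun i j hij => (Multiset.pairwise_sort _ _).sortedLE.monotone_get hij
  · rw [← List.ofFn_congr hlen l.get, List.ofFn_get, Multiset.sort_eq]

theorem card_monotone_fin_eq_card_sym [Fintype α] (k : ℕ) :
    Nat.card {f : Fin k → α // Monotone f} = Fintype.card (Sym α k) := by
  rw [← Nat.card_eq_fintype_card]
  refine Nat.card_eq_of_bijective (fun f => ⟨List.ofFn f.1, by simp⟩) ⟨?_, fun s => ?_⟩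
  · exact fun f g h => Subtype.ext (f.2.eq_of_coe_ofFn_eq g.2 (congrArg Subtype.val h))
  · obtain ⟨f, hf, hfs⟩ := s.exists_monotone_coe_ofFn_eq
    exact ⟨⟨f, hf⟩, Subtype.ext hfs⟩

end MonotoneTuples

theorem ncard_setOf_monotone_fin (d : ℕ) :
    {ℓ : Fin d → Fin d | Monotone ℓ}.ncard = Nat.choose (2 * d - 1) d := by
  rw [← Nat.card_coe_set_eq, Set.coe_ofPred, card_monotone_fin_eq_card_sym,
    Sym.card_sym_eq_choose, Fintype.card_fin, two_mul]

theorem exists_ne_zero_forall_lt_eq_zero {ι M : Type*} [LinearOrder ι] [Fintype ι] [Zero M]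
    (v : ι → M) (h : ∃ k, v k ≠ 0) : ∃ j, v j ≠ 0 ∧ ∀ k, j < k → v k = 0 := by
  classical
  obtain ⟨k, hk⟩ := h
  obtain ⟨j, hj, hmax⟩ := exists_max_image (univ.filter fun k => v k ≠ 0) id ⟨k, by simpa⟩
  refine ⟨j, by simpa using hj, fun i hji => ?_⟩
  by_contra hi
  exact (hmax i (by simpa using hi)).not_gt hji

section MonotoneMarkov

variable {d : ℕ} {M : Matrix (Fin d) (Fin d) ℝ} {ℓ : Fin d → Fin d}

theorem sum_Ici_erow (ℓ : Fin d → Fin d) (i m : Fin d) :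
    ∑ k ∈ Ici m, Erow ℓ i k = if m ≤ ℓ i then 1 else 0 := by
  simp [Erow]

theorem isMarkov_erow (ℓ : Fin d → Fin d) : IsMarkov (Erow ℓ) :=
  ⟨fun i j => by simp only [Erow, of_apply]; split_ifs <;> norm_num, fun i => by simp [Erow]⟩

theorem isMonotone_erow_iff : IsMonotone (Erow ℓ) ↔ Monotone ℓ := by
  refine ⟨fun h i j hij => ?_, fun h i j hij m => ?_⟩
  · by_contra hlt
    have := h i j hij (ℓ i)
    norm_num [sum_Ici_erow, hlt] at this
  · simp only [sum_Ici_erow]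
    split_ifs with hi hj <;> first | exact absurd (hi.trans (h hij)) hj | norm_num

theorem erow_injective : Function.Injective (Erow (d := d)) := by
  intro ℓ ℓ' h
  funext i
  simpa [Erow] using congr_fun₂ h i (ℓ i)

theorem IsMarkov.apply_le_one (hM : IsMarkov M) (i j : Fin d) : M i j ≤ 1 :=
  hM.2 i ▸ single_le_sum (fun k _ => hM.1 i k) (mem_univ j)

theorem IsMarkov.eq_erow_of_apply_eq_one (hM : IsMarkov M) (h : ∀ i, M i (ℓ i) = 1) :
    M = Erow ℓ := by
  ext i k
  simp only [Erow, of_apply]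
  split_ifs with hk
  · exact hk ▸ h i
  · have hrest := add_sum_erase univ (M i) (mem_univ (ℓ i))
    rw [hM.2 i, h i] at hrest
    exact (sum_eq_zero_iff_of_nonneg fun k _ => hM.1 i k).1 (by linarith) k
      (mem_erase.2 ⟨hk, mem_univ k⟩)

theorem IsMarkov.exists_eq_erow (hM : IsMarkov M) (h01 : ∀ i j, M i j = 0 ∨ M i j = 1) :
    ∃ ℓ, M = Erow ℓ := by
  have : ∀ i, ∃ k, M i k = 1 := by
    intro i
    by_contra! h
    have := hM.2 i
    rw [sum_eq_zero fun k _ => (h01 i k).resolve_right (h k)] at this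
    norm_num at this
  choose ℓ hℓ using this
  exact ⟨ℓ, hM.eq_erow_of_apply_eq_one hℓ⟩

theorem setOf_zero_one_eq_image_erow :
    {M : Matrix (Fin d) (Fin d) ℝ |
        (IsMarkov M ∧ IsMonotone M) ∧ ∀ i j, M i j = 0 ∨ M i j = 1}
      = Erow '' {ℓ : Fin d → Fin d | Monotone ℓ} := by
  ext M
  constructor
  · rintro ⟨⟨hM, hm⟩, h01⟩
    obtain ⟨ℓ, rfl⟩ := hM.exists_eq_erow h01
    exact ⟨ℓ, isMonotone_erow_iff.1 hm, rfl⟩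
  · rintro ⟨ℓ, hℓ, rfl⟩
    refine ⟨⟨isMarkov_erow ℓ, isMonotone_erow_iff.2 hℓ⟩, fun i j => ?_⟩
    simp only [Erow, of_apply]
    split_ifs <;> simp

theorem convex_setOf_isMarkov_isMonotone :
    Convex ℝ {M : Matrix (Fin d) (Fin d) ℝ | IsMarkov M ∧ IsMonotone M} := by
  rintro x ⟨⟨hx0, hx1⟩, hxm⟩ y ⟨⟨hy0, hy1⟩, hym⟩ a b ha hb hab
  refine ⟨⟨fun i j => ?_, fun i => ?_⟩, fun i j hij m => ?_⟩ <;>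
    simp only [Matrix.add_apply, Matrix.smul_apply, smul_eq_mul, sum_add_distrib, ← mul_sum]
  · have := hx0 i j; have := hy0 i j; positivity
  · rw [hx1, hy1]; linarith
  · have := hxm i j hij m; have := hym i j hij m; gcongr

theorem erow_mem_extremePoints_setOf_isMarkov (ℓ : Fin d → Fin d) :
    Erow ℓ ∈ Set.extremePoints ℝ {M : Matrix (Fin d) (Fin d) ℝ | IsMarkov M} := by
  refine mem_extremePoints_iff_left.2 ⟨isMarkov_erow ℓ, fun x hx y hy ⟨a, b, ha, hb, hab, hxy⟩ =>
    hx.eq_erow_of_apply_eq_one fun i => ?_⟩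
  have hcomb : a * x i (ℓ i) + b * y i (ℓ i) = 1 := by simpa [Erow] using congr_fun₂ hxy i (ℓ i)
  have := hx.apply_le_one i (ℓ i)
  have := hy.apply_le_one i (ℓ i)
  nlinarith

theorem monotone_of_forall_lt_eq_zero (hnn : ∀ i j, 0 ≤ M i j) (hm : IsMonotone M)
    (hpos : ∀ i, M i (ℓ i) ≠ 0) (hzero : ∀ i k, ℓ i < k → M i k = 0) : Monotone ℓ := by
  intro i j hij
  by_contra! hlt
  have hi : M i (ℓ i) ≤ ∑ k ∈ Ici (ℓ i), M i k := single_le_sum (fun k _ => hnn i k) (by simp)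
  have hj : ∑ k ∈ Ici (ℓ i), M j k = 0 :=
    sum_eq_zero fun k hk => hzero j k (hlt.trans_le (mem_Ici.1 hk))
  have := hm i j hij (ℓ i)
  have := (hnn i (ℓ i)).lt_of_ne' (hpos i)
  linarith

theorem IsMonotone.sub_smul_erow (hm : IsMonotone M) (hnn : ∀ i j, 0 ≤ M i j)
    (hzero : ∀ i k, ℓ i < k → M i k = 0) (hℓ : Monotone ℓ) {c : ℝ} (hc : ∀ i, c ≤ M i (ℓ i)) :
    IsMonotone (M - c • Erow ℓ) := by
  intro i j hij m
  simp only [Matrix.sub_apply, Matrix.smul_apply, smul_eq_mul, sum_sub_distrib, ← mul_sum,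
    sum_Ici_erow]
  have := hm i j hij m
  split_ifs with hi hj hj
  · linarith
  · exact absurd (hi.trans (hℓ hij)) hj
  · have h0 : ∑ k ∈ Ici m, M i k = 0 :=
      sum_eq_zero fun k hk => hzero i k ((not_le.1 hi).trans_le (mem_Ici.1 hk))
    have h1 : M j (ℓ j) ≤ ∑ k ∈ Ici m, M j k := single_le_sum (fun k _ => hnn j k) (mem_Ici.2 hj)
    linarith [hc j]
  · linarith

theorem sub_smul_erow_nonneg (hnn : ∀ i j, 0 ≤ M i j) {c : ℝ} (hc : ∀ i, c ≤ M i (ℓ i))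
    (i j : Fin d) : 0 ≤ (M - c • Erow ℓ) i j := by
  by_cases hj : j = ℓ i
  · subst hj
    simpa [Erow] using hc i
  · simpa [Erow, hj] using hnn i j

theorem sum_sub_smul_erow_apply (c : ℝ) (i : Fin d) :
    ∑ j, (M - c • Erow ℓ) i j = ∑ j, M i j - c := by
  simp [Erow, sum_sub_distrib]

theorem card_filter_sub_smul_erow_ne_zero_lt (hpos : ∀ i, M i (ℓ i) ≠ 0) (i₀ : Fin d) :
    #{p : Fin d × Fin d | (M - M i₀ (ℓ i₀) • Erow ℓ) p.1 p.2 ≠ 0} <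
      #{p : Fin d × Fin d | M p.1 p.2 ≠ 0} := by
  refine card_lt_card ((ssubset_iff_of_subset fun p hp => ?_).2 ⟨(i₀, ℓ i₀), ?_, ?_⟩)
  · simp only [mem_filter, mem_univ, true_and] at hp ⊢
    by_cases hk : p.2 = ℓ p.1
    · exact hk ▸ hpos p.1
    · simpa [Erow, hk] using hp
  · simp [hpos i₀]
  · simp [Erow]

theorem mem_smul_convexHull_erow {s : ℝ} (hnn : ∀ i j, 0 ≤ M i j) (hsum : ∀ i, ∑ j, M i j = s)
    (hm : IsMonotone M) : M ∈ s • convexHull ℝ (Erow '' {ℓ : Fin d → Fin d | Monotone ℓ}) := by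
  set H := convexHull ℝ (Erow '' {ℓ : Fin d → Fin d | Monotone ℓ})
  have hH : H.Nonempty := ⟨Erow id, subset_convexHull ℝ _ ⟨id, monotone_id, rfl⟩⟩
  induction hn : #{p : Fin d × Fin d | M p.1 p.2 ≠ 0} using Nat.strong_induction_on
    generalizing M s with
  | _ n ih =>
  rcases isEmpty_or_nonempty (Fin d) with hd | hd
  · obtain ⟨E, hE⟩ := hH
    exact ⟨E, hE, Subsingleton.elim _ _⟩
  by_cases hrow : ∃ i, ∀ k, M i k = 0
  · obtain ⟨i, hi⟩ := hrow
    have hs : s = 0 := by simp [← hsum i, hi]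
    have hM : M = 0 := by
      ext i' k
      exact (sum_eq_zero_iff_of_nonneg fun k _ => hnn i' k).1 (hs ▸ hsum i') k (mem_univ k)
    rw [hs, hM, Set.zero_smul_set hH]
    rfl
  push Not at hrow
  choose ℓ hpos hzero using fun i => exists_ne_zero_forall_lt_eq_zero (M i) (hrow i)
  have hℓ : Monotone ℓ := monotone_of_forall_lt_eq_zero hnn hm hpos hzero
  obtain ⟨i₀, -, hi₀⟩ := exists_min_image univ (fun i => M i (ℓ i)) univ_nonempty
  set c := M i₀ (ℓ i₀)
  have hc : 0 < c := (hnn _ _).lt_of_ne' (hpos i₀)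
  have hcmin : ∀ i, c ≤ M i (ℓ i) := fun i => hi₀ i (mem_univ i)
  have hnn' := sub_smul_erow_nonneg hnn hcmin
  have hsum' : ∀ i, ∑ j, (M - c • Erow ℓ) i j = s - c := fun i => by
    rw [sum_sub_smul_erow_apply, hsum i]
  have hsc : 0 ≤ s - c := hsum' i₀ ▸ sum_nonneg fun j _ => hnn' i₀ j
  have hrest : M - c • Erow ℓ ∈ (s - c) • H :=
    ih _ (hn ▸ card_filter_sub_smul_erow_ne_zero_lt hpos i₀) hnn' hsum'
      (hm.sub_smul_erow hnn hzero hℓ hcmin) rfl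
  have hE : c • Erow ℓ ∈ c • H := Set.smul_mem_smul_set (subset_convexHull ℝ _ ⟨ℓ, hℓ, rfl⟩)
  rw [show s = c + (s - c) by ring, (convex_convexHull ℝ _).add_smul hc.le hsc]
  exact ⟨_, hE, _, hrest, add_sub_cancel _ _⟩

theorem setOf_isMarkov_isMonotone_eq_convexHull :
    {M : Matrix (Fin d) (Fin d) ℝ | IsMarkov M ∧ IsMonotone M}
      = convexHull ℝ (Erow '' {ℓ : Fin d → Fin d | Monotone ℓ}) := by
  refine Set.Subset.antisymm
    (fun M ⟨hM, hm⟩ => by simpa using mem_smul_convexHull_erow hM.1 hM.2 hm)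
    (convexHull_min ?_ convex_setOf_isMarkov_isMonotone)
  rintro _ ⟨ℓ, hℓ, rfl⟩
  exact ⟨isMarkov_erow ℓ, isMonotone_erow_iff.2 hℓ⟩

end MonotoneMarkov

theorem stmt_8_general {d : ℕ} :
    Convex ℝ {M : Matrix (Fin d) (Fin d) ℝ | IsMarkov M ∧ IsMonotone M} ∧
    Set.extremePoints ℝ {M : Matrix (Fin d) (Fin d) ℝ | IsMarkov M ∧ IsMonotone M}
      = {M : Matrix (Fin d) (Fin d) ℝ |
          (IsMarkov M ∧ IsMonotone M) ∧ ∀ i j, M i j = 0 ∨ M i j = 1} ∧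
    {M : Matrix (Fin d) (Fin d) ℝ |
        (IsMarkov M ∧ IsMonotone M) ∧ ∀ i j, M i j = 0 ∨ M i j = 1}.ncard
      = Nat.choose (2 * d - 1) d ∧
    {M : Matrix (Fin d) (Fin d) ℝ |
        (IsMarkov M ∧ IsMonotone M) ∧ ∀ i j, M i j = 0 ∨ M i j = 1}
      = Erow '' {ℓ : Fin d → Fin d | Monotone ℓ} ∧
    {M : Matrix (Fin d) (Fin d) ℝ | IsMarkov M ∧ IsMonotone M}
      = convexHull ℝ (Erow '' {ℓ : Fin d → Fin d | Monotone ℓ}) := by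
  have hull := setOf_isMarkov_isMonotone_eq_convexHull (d := d)
  have zeroOne := setOf_zero_one_eq_image_erow (d := d)
  refine ⟨convex_setOf_isMarkov_isMonotone, ?_, ?_, zeroOne, hull⟩
  · refine Set.Subset.antisymm ?_ ?_
    · rw [hull, zeroOne]
      exact extremePoints_convexHull_subset
    · rw [zeroOne]
      rintro _ ⟨ℓ, hℓ, rfl⟩
      exact inter_extremePoints_subset_extremePoints_of_subset (fun M hM => hM.1)
        ⟨⟨isMarkov_erow ℓ, isMonotone_erow_iff.2 hℓ⟩, erow_mem_extremePoints_setOf_isMarkov ℓ⟩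
  · rw [zeroOne, Set.ncard_image_of_injective _ erow_injective, ncard_setOf_monotone_fin]

/-- the set of monotone Markov matrices is convex, its extreme
points are exactly the monotone `{0,1}` Markov matrices, there are exactly
`binom(2d-1,d)` of these, and the whole set is the convex hull of the matrices
`E_ℓ` for monotone `ℓ`. -/
theorem stmt_8 {d : ℕ} (hd : 1 ≤ d) :
    Convex ℝ {M : Matrix (Fin d) (Fin d) ℝ | IsMarkov M ∧ IsMonotone M} ∧
    Set.extremePoints ℝ {M : Matrix (Fin d) (Fin d) ℝ | IsMarkov M ∧ IsMonotone M}
      = {M : Matrix (Fin d) (Fin d) ℝ |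
          (IsMarkov M ∧ IsMonotone M) ∧ ∀ i j, M i j = 0 ∨ M i j = 1} ∧
    {M : Matrix (Fin d) (Fin d) ℝ |
        (IsMarkov M ∧ IsMonotone M) ∧ ∀ i j, M i j = 0 ∨ M i j = 1}.ncard
      = Nat.choose (2 * d - 1) d ∧
    {M : Matrix (Fin d) (Fin d) ℝ |
        (IsMarkov M ∧ IsMonotone M) ∧ ∀ i j, M i j = 0 ∨ M i j = 1}
      = Erow '' {ℓ : Fin d → Fin d | Monotone ℓ} ∧
    {M : Matrix (Fin d) (Fin d) ℝ | IsMarkov M ∧ IsMonotone M}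
      = convexHull ℝ (Erow '' {ℓ : Fin d → Fin d | Monotone ℓ}) :=
  stmt_8_general
end

section
/- A 2×2 Markov matrix M is monotone if and only if trace(M) ≥ 1. Consequently, a 2×2 Markov matrix is monotone if and only if it is either embeddable or a non-trivial idempotent (i.e. M² = M with M ≠ I). -/
open Matrix

/-- A Markov generator: nonnegative off-diagonal entries, zero row sums. -/
def IsGenerator {d : ℕ} (Q : Matrix (Fin d) (Fin d) ℝ) : Prop :=
  (∀ i j, i ≠ j → 0 ≤ Q i j) ∧ ∀ i, ∑ j, Q i j = 0

/-- An embeddable Markov matrix: the exponential of a Markov generator. -/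
def IsEmbeddable {d : ℕ} (M : Matrix (Fin d) (Fin d) ℝ) : Prop :=
  ∃ Q : Matrix (Fin d) (Fin d) ℝ, IsGenerator Q ∧ NormedSpace.exp Q = M

/-!
Every `2×2` Markov matrix is `P = 1 + G` with `G = !![-a, a; b, -b]`, `a, b ≥ 0`, and
`G² = -(a + b) G`. Hence `trace P = 2 - (a + b)`, `det P = trace P - 1`, and monotonicity is
`a + b ≤ 1`. Since `P² - P = (1 - (a + b)) G`, the nontrivial idempotents are exactly the case
`a + b = 1`. If `D := 1 - (a + b) ∈ (0, 1)`, the identity `G² = (D - 1) G` makes the exponential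
series of `c G` collapse to `1 + ((e^{c(D-1)} - 1)/(D - 1)) G`, so `Q = (log D / (D - 1)) G` is a
generator with `exp Q = P`. Conversely `det (exp Q) = det (exp (Q/2))² ≥ 0`, so an embeddable `P`
has `trace P ≥ 1`.
-/

lemma pow_succ_of_mul_self_eq_smul {R A : Type*} [CommSemiring R] [Semiring A] [Algebra R A]
    {x : A} {μ : R} (h : x * x = μ • x) (n : ℕ) : x ^ (n + 1) = μ ^ n • x := by
  induction n with
  | zero => simp
  | succ n ih => rw [pow_succ, ih, smul_mul_assoc, h, smul_smul, pow_succ]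

open Nat in
lemma exp_of_mul_self_eq_smul {A : Type*} [NormedRing A] [NormedAlgebra ℝ A] [CompleteSpace A]
    {x : A} {μ : ℝ} (h : x * x = μ • x) (hμ : μ ≠ 0) :
    NormedSpace.exp x = 1 + ((Real.exp μ - 1) / μ) • x := by
  -- `μ • x ^ n = μ ^ n • x` except for `n = 0`, which is corrected by the term `μ • 1 - x`.
  have hsum :
      HasSum (fun n : ℕ => μ • ((n ! : ℝ)⁻¹ • x ^ n)) (Real.exp μ • x + (μ • 1 - x)) := by
    have hμexp := (NormedSpace.exp_series_hasSum_exp' (𝕂 := ℝ) μ).smul_const x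
    rw [← Real.exp_eq_exp_ℝ] at hμexp
    convert hμexp.add (hasSum_ite_eq 0 (μ • (1 : A) - x)) using 1
    funext n
    rcases n with _ | n
    · simp
    · rw [if_neg n.succ_ne_zero, add_zero, pow_succ_of_mul_self_eq_smul h, smul_smul, smul_smul,
        smul_eq_mul, pow_succ]
      ring_nf
  have hsmul_exp := hsum.unique ((NormedSpace.exp_series_hasSum_exp' (𝕂 := ℝ) x).const_smul μ)
  calc NormedSpace.exp x = μ⁻¹ • (μ • NormedSpace.exp x) := (inv_smul_smul₀ hμ _).symm
    _ = 1 + ((Real.exp μ - 1) / μ) • x := by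
      rw [← hsmul_exp, smul_add, smul_sub, inv_smul_smul₀ hμ]
      module

lemma exp_smul_log_div_eq_one_add {A : Type*} [NormedRing A] [NormedAlgebra ℝ A] [CompleteSpace A]
    {x : A} {D : ℝ} (h : x * x = (D - 1) • x) (hD : 0 < D) (hD1 : D ≠ 1) :
    NormedSpace.exp ((Real.log D / (D - 1)) • x) = 1 + x := by
  have hD1' : D - 1 ≠ 0 := sub_ne_zero.2 hD1
  have hlog : Real.log D ≠ 0 := Real.log_ne_zero_of_pos_of_ne_one hD hD1
  have hsq : (Real.log D / (D - 1)) • x * (Real.log D / (D - 1)) • x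
      = Real.log D • (Real.log D / (D - 1)) • x := by
    rw [smul_mul_smul_comm, h, smul_smul, smul_smul]
    congr 1
    field_simp
  rw [exp_of_mul_self_eq_smul hsq hlog, Real.exp_log hD, smul_smul,
    div_mul_div_cancel₀ hlog, div_self hD1', one_smul]

lemma Matrix.det_exp_nonneg {n : Type*} [Fintype n] [DecidableEq n] (Q : Matrix n n ℝ) :
    0 ≤ (NormedSpace.exp Q).det := by
  have hQ : Q = 2 • ((1 / 2 : ℝ) • Q) := by rw [two_nsmul, ← add_smul]; norm_num
  rw [hQ, Matrix.exp_nsmul, Matrix.det_pow]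
  exact sq_nonneg _

lemma IsGenerator.smul {d : ℕ} {Q : Matrix (Fin d) (Fin d) ℝ} (hQ : IsGenerator Q) {c : ℝ}
    (hc : 0 ≤ c) : IsGenerator (c • Q) :=
  ⟨fun i j hij => mul_nonneg hc (hQ.1 i j hij), fun i => by simp [← Finset.mul_sum, hQ.2 i]⟩

lemma IsMarkov.isGenerator_sub_one {d : ℕ} {M : Matrix (Fin d) (Fin d) ℝ} (hM : IsMarkov M) :
    IsGenerator (M - 1) :=
  ⟨fun i j hij => by simpa [Matrix.one_apply_ne hij] using hM.1 i j,
    fun i => by simp [Finset.sum_sub_distrib, Matrix.one_apply, hM.2 i]⟩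

def twoStateMatrix (a b : ℝ) : Matrix (Fin 2) (Fin 2) ℝ := !![1 - a, a; b, 1 - b]

lemma IsMarkov.eq_twoStateMatrix {M : Matrix (Fin 2) (Fin 2) ℝ} (hM : IsMarkov M) :
    M = twoStateMatrix (M 0 1) (M 1 0) := by
  have h0 := hM.2 0
  have h1 := hM.2 1
  simp only [Fin.sum_univ_two] at h0 h1
  rw [Matrix.eta_fin_two M, twoStateMatrix]
  simp only [Matrix.of_apply, Matrix.cons_val', Matrix.cons_val_zero, Matrix.cons_val_one,
    Matrix.empty_val', Matrix.cons_val_fin_one]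
  congr <;> linarith

section TwoState

variable {a b : ℝ}

lemma twoStateMatrix_zero_zero : twoStateMatrix 0 0 = 1 := by
  simp [twoStateMatrix, Matrix.one_fin_two]

lemma trace_twoStateMatrix : (twoStateMatrix a b).trace = 2 - (a + b) := by
  simp [twoStateMatrix, Matrix.trace_fin_two]
  ring

lemma det_twoStateMatrix : (twoStateMatrix a b).det = 1 - (a + b) := by
  simp [twoStateMatrix, Matrix.det_fin_two]
  ring

lemma isMonotone_twoStateMatrix_iff : IsMonotone (twoStateMatrix a b) ↔ a + b ≤ 1 := by
  have hIci : Finset.Ici (1 : Fin 2) = {1} := rfl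
  simp [IsMonotone, twoStateMatrix, Fin.forall_fin_two, hIci, Fin.sum_univ_two, le_sub_iff_add_le]

lemma twoStateMatrix_sub_one_mul_self :
    (twoStateMatrix a b - 1) * (twoStateMatrix a b - 1) =
      (-(a + b)) • (twoStateMatrix a b - 1) := by
  ext i j
  fin_cases i <;> fin_cases j <;> simp [twoStateMatrix, Matrix.one_fin_two] <;> ring

lemma twoStateMatrix_mul_self_eq_self_iff :
    twoStateMatrix a b * twoStateMatrix a b = twoStateMatrix a b ↔
      a + b = 1 ∨ twoStateMatrix a b = 1 := by
  have h : twoStateMatrix a b * twoStateMatrix a b - twoStateMatrix a b =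
      (1 - (a + b)) • (twoStateMatrix a b - 1) :=
    calc _ = (twoStateMatrix a b - 1) * (twoStateMatrix a b - 1) + (twoStateMatrix a b - 1) := by
          noncomm_ring
      _ = _ := by rw [twoStateMatrix_sub_one_mul_self]; module
  rw [← sub_eq_zero, h, smul_eq_zero, sub_eq_zero, sub_eq_zero, eq_comm]

attribute [local instance] Matrix.linftyOpNormedRing Matrix.linftyOpNormedAlgebra in
lemma isEmbeddable_twoStateMatrix (hM : IsMarkov (twoStateMatrix a b)) (hab : a + b < 1) :
    IsEmbeddable (twoStateMatrix a b) := by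
  have ha : 0 ≤ a := by simpa [twoStateMatrix] using hM.1 0 1
  have hb : 0 ≤ b := by simpa [twoStateMatrix] using hM.1 1 0
  set D := 1 - (a + b) with hD
  have hD0 : 0 < D := by linarith
  have hc : 0 ≤ Real.log D / (D - 1) :=
    div_nonneg_of_nonpos (Real.log_nonpos hD0.le (by linarith)) (by linarith)
  refine ⟨(Real.log D / (D - 1)) • (twoStateMatrix a b - 1),
    hM.isGenerator_sub_one.smul hc, ?_⟩
  rcases eq_or_ne D 1 with hD1 | hD1
  -- here the generator is `0`, as `log 1 / 0 = 0`
  · obtain ⟨rfl, rfl⟩ : a = 0 ∧ b = 0 := ⟨by linarith, by linarith⟩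
    simp [twoStateMatrix_zero_zero]
  · have hsq : (twoStateMatrix a b - 1) * (twoStateMatrix a b - 1) =
        (D - 1) • (twoStateMatrix a b - 1) := by
      rw [twoStateMatrix_sub_one_mul_self, hD, sub_sub_cancel_left]
    exact (exp_smul_log_div_eq_one_add hsq hD0 hD1).trans (add_sub_cancel _ _)

end TwoState

/-- a `2×2` Markov matrix is monotone iff its trace is `≥ 1`,
iff it is embeddable or a non-trivial idempotent. -/
theorem stmt_10 (M : Matrix (Fin 2) (Fin 2) ℝ) (hM : IsMarkov M) :
    (IsMonotone M ↔ 1 ≤ Matrix.trace M) ∧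
    (IsMonotone M ↔ (IsEmbeddable M ∨ (M * M = M ∧ M ≠ 1))) := by
  obtain ⟨a, b, rfl⟩ : ∃ a b, M = twoStateMatrix a b := ⟨_, _, hM.eq_twoStateMatrix⟩
  rw [isMonotone_twoStateMatrix_iff, trace_twoStateMatrix, twoStateMatrix_mul_self_eq_self_iff]
  refine ⟨by constructor <;> intro <;> linarith, ⟨fun hab => ?_, ?_⟩⟩
  · rcases hab.lt_or_eq with hab | hab
    · exact Or.inl (isEmbeddable_twoStateMatrix hM hab)
    · refine Or.inr ⟨Or.inl hab, fun h1 => ?_⟩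
      have htr := congrArg Matrix.trace h1
      rw [trace_twoStateMatrix, Matrix.trace_one, hab] at htr
      norm_num at htr
  · rintro (⟨Q, -, hQ⟩ | ⟨hab | h1, hne⟩)
    · have hdet := Matrix.det_exp_nonneg Q
      rw [hQ, det_twoStateMatrix] at hdet
      linarith
    · exact hab.le
    · exact absurd h1 hne
end

section
/- A 2×2 Markov matrix M is infinitely divisible (i.e. for every n ≥ 1 there exists a 2×2 Markov matrix R with Rⁿ = M) if and only if M is monotone (equivalently, trace(M) ≥ 1). Moreover, every monotone 2×2 Markov matrix is infinitely divisible within the monotone matrices: for every n ≥ 1 there is a monotone Markov matrix R with Rⁿ = M. -/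
open Matrix

/-!
Every `2×2` Markov matrix is `!![1-a, a; b, 1-b]` with `a, b ∈ [0,1]`; its trace is `1 + det`
and its determinant is the second eigenvalue `1 - (a + b)`, so monotonicity, `trace ≥ 1` and
`det ≥ 0` all say `a + b ≤ 1`. A square root forces `det M = (det R)^2 ≥ 0`. Conversely, with
`P` the idempotent whose rows are the stationary distribution, `M = λ • 1 + (1 - λ) • P` for
`λ = 1 - (a + b) ≥ 0`, and the `n`-th power of `μ • 1 + (1 - μ) • P` is `μ^n • 1 + (1 - μ^n) • P`;
taking `μ = λ^(1/n)` gives a monotone Markov `n`-th root.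
-/

theorem IsIdempotentElem.pow_smul_one_add_smul {R A : Type*} [CommRing R] [Ring A] [Algebra R A]
    {P : A} (hP : IsIdempotentElem P) (μ : R) (n : ℕ) :
    (μ • 1 + (1 - μ) • P) ^ n = μ ^ n • (1 : A) + (1 - μ ^ n) • P := by
  induction n with
  | zero => simp
  | succ n ih =>
    rw [pow_succ, ih]
    simp only [add_mul, mul_add, smul_mul_smul, one_mul, mul_one, hP.eq]
    module

noncomputable def markov2 (a b : ℝ) : Matrix (Fin 2) (Fin 2) ℝ := !![1 - a, a; b, 1 - b]

theorem IsMarkov.eq_markov2 {M : Matrix (Fin 2) (Fin 2) ℝ} (hM : IsMarkov M) :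
    M = markov2 (M 0 1) (M 1 0) := by
  have h0 : M 0 0 + M 0 1 = 1 := by simpa [Fin.sum_univ_two] using hM.2 0
  have h1 : M 1 0 + M 1 1 = 1 := by simpa [Fin.sum_univ_two] using hM.2 1
  ext i j
  fin_cases i <;> fin_cases j <;> simp [markov2] <;> linarith

theorem isMarkov_markov2 {a b : ℝ} (ha₀ : 0 ≤ a) (ha₁ : a ≤ 1) (hb₀ : 0 ≤ b) (hb₁ : b ≤ 1) :
    IsMarkov (markov2 a b) := by
  refine ⟨fun i j => ?_, fun i => ?_⟩
  · fin_cases i <;> fin_cases j <;> simp [markov2] <;> linarith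
  · fin_cases i <;> simp [markov2, Fin.sum_univ_two]

theorem isMonotone_markov2_iff {a b : ℝ} : IsMonotone (markov2 a b) ↔ a + b ≤ 1 := by
  have Ici_zero : Finset.Ici (0 : Fin 2) = Finset.univ := by decide
  have Ici_one : Finset.Ici (1 : Fin 2) = {1} := by decide
  constructor
  · intro h
    have h01 := h 0 1 (by decide) 1
    simp [Ici_one, markov2] at h01
    linarith
  · intro h i j hij m
    rcases hij.eq_or_lt with rfl | hlt
    · exact le_rfl
    obtain ⟨rfl, rfl⟩ : i = 0 ∧ j = 1 := by omega
    fin_cases m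
    · simp [Ici_zero, markov2, Fin.sum_univ_two]
    · simp [Ici_one, markov2]
      linarith

theorem trace_markov2 (a b : ℝ) : trace (markov2 a b) = 2 - (a + b) := by
  rw [markov2, trace_fin_two_of]
  ring

theorem det_markov2 (a b : ℝ) : det (markov2 a b) = 1 - (a + b) := by
  rw [markov2, det_fin_two_of]
  ring

theorem IsMarkov.isMonotone_iff_add_le_one {M : Matrix (Fin 2) (Fin 2) ℝ} (hM : IsMarkov M) :
    IsMonotone M ↔ M 0 1 + M 1 0 ≤ 1 := by
  rw [← isMonotone_markov2_iff, ← hM.eq_markov2]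

theorem IsMarkov.isMonotone_iff_one_le_trace {M : Matrix (Fin 2) (Fin 2) ℝ} (hM : IsMarkov M) :
    IsMonotone M ↔ 1 ≤ trace M := by
  rw [hM.eq_markov2, isMonotone_markov2_iff, trace_markov2]
  constructor <;> intro <;> linarith

theorem IsMarkov.isMonotone_iff_det_nonneg {M : Matrix (Fin 2) (Fin 2) ℝ} (hM : IsMarkov M) :
    IsMonotone M ↔ 0 ≤ det M := by
  rw [hM.eq_markov2, isMonotone_markov2_iff, det_markov2]
  constructor <;> intro <;> linarith

theorem IsMarkov.isMonotone_of_sq_eq {M R : Matrix (Fin 2) (Fin 2) ℝ} (hM : IsMarkov M)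
    (hR : R ^ 2 = M) : IsMonotone M := by
  rw [hM.isMonotone_iff_det_nonneg, ← hR, det_pow]
  exact sq_nonneg _

theorem isIdempotentElem_markov2_one_sub (p : ℝ) : IsIdempotentElem (markov2 p (1 - p)) := by
  ext i j
  fin_cases i <;> fin_cases j <;> simp [markov2, mul_apply, Fin.sum_univ_two] <;> ring

theorem markov2_mul_one_sub_eq_smul_one_add_smul (p μ : ℝ) :
    markov2 (p * (1 - μ)) ((1 - p) * (1 - μ)) = μ • 1 + (1 - μ) • markov2 p (1 - p) := by
  ext i j
  fin_cases i <;> fin_cases j <;> simp [markov2] <;> ring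

theorem markov2_mul_one_sub_pow (p μ : ℝ) (n : ℕ) :
    markov2 (p * (1 - μ)) ((1 - p) * (1 - μ)) ^ n =
      markov2 (p * (1 - μ ^ n)) ((1 - p) * (1 - μ ^ n)) := by
  rw [markov2_mul_one_sub_eq_smul_one_add_smul, markov2_mul_one_sub_eq_smul_one_add_smul,
    (isIdempotentElem_markov2_one_sub p).pow_smul_one_add_smul]

theorem exists_isMarkov_isMonotone_pow_eq_markov2 {a b : ℝ} (ha : 0 ≤ a) (hb : 0 ≤ b)
    (hab : a + b ≤ 1) {n : ℕ} (hn : n ≠ 0) :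
    ∃ R, IsMarkov R ∧ IsMonotone R ∧ R ^ n = markov2 a b := by
  set s := a + b
  set p := a / s
  set μ := (1 - s) ^ (n⁻¹ : ℝ)
  have hp₀ : 0 ≤ p := by positivity
  have hp₁ : p ≤ 1 := div_le_one_of_le₀ (le_add_of_nonneg_right hb) (add_nonneg ha hb)
  have hμ₀ : 0 ≤ μ := Real.rpow_nonneg (by linarith) _
  have hμ₁ : μ ≤ 1 := Real.rpow_le_one (by linarith) (by linarith) (by positivity)
  have hμn : μ ^ n = 1 - s := Real.rpow_inv_natCast_pow (by linarith) hn
  -- when `s = 0` the junk value `p = 0` is harmless, since then `a = 0` too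
  have hps : p * s = a := by
    rcases eq_or_ne s 0 with hs | hs
    · simp only [hs, mul_zero]; linarith
    · exact div_mul_cancel₀ a hs
  refine ⟨markov2 (p * (1 - μ)) ((1 - p) * (1 - μ)), ?_, ?_, ?_⟩
  · apply isMarkov_markov2 <;> nlinarith
  · rw [isMonotone_markov2_iff]; nlinarith
  · rw [markov2_mul_one_sub_pow, hμn, sub_sub_cancel, hps, sub_mul, one_mul, hps]
    simp only [s, add_sub_cancel_left]

/-- a `2×2` Markov matrix is infinitely divisible iff it is
monotone (iff its trace is `≥ 1`); moreover, every monotone `2×2` Markov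
matrix has a monotone Markov `n`-th root for every `n ≥ 1`. -/
theorem stmt_11 (M : Matrix (Fin 2) (Fin 2) ℝ) (hM : IsMarkov M) :
    ((∀ n : ℕ, 1 ≤ n → ∃ R : Matrix (Fin 2) (Fin 2) ℝ, IsMarkov R ∧ R ^ n = M)
        ↔ IsMonotone M) ∧
    (IsMonotone M ↔ 1 ≤ Matrix.trace M) ∧
    (IsMonotone M →
      ∀ n : ℕ, 1 ≤ n →
        ∃ R : Matrix (Fin 2) (Fin 2) ℝ, IsMarkov R ∧ IsMonotone R ∧ R ^ n = M) := by
  have roots : IsMonotone M → ∀ n : ℕ, 1 ≤ n →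
      ∃ R : Matrix (Fin 2) (Fin 2) ℝ, IsMarkov R ∧ IsMonotone R ∧ R ^ n = M := by
    intro hmono n hn
    rw [hM.eq_markov2]
    exact exists_isMarkov_isMonotone_pow_eq_markov2 (hM.1 0 1) (hM.1 1 0)
      (hM.isMonotone_iff_add_le_one.mp hmono) (by omega)
  refine ⟨⟨fun hdiv => ?_, fun hmono n hn => ?_⟩, hM.isMonotone_iff_one_le_trace, roots⟩
  · obtain ⟨R, -, hR⟩ := hdiv 2 (by norm_num)
    exact hM.isMonotone_of_sq_eq hR
  · obtain ⟨R, hRM, -, hR⟩ := roots hmono n hn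
    exact ⟨R, hRM, hR⟩
end

section
/- Let d ≥ 2, let C be a nonnegative d×d matrix with equal rows and parameter sum c ∈ [0,1], and let M = (1-c)·I + C. Then M is a monotone Markov matrix, and: (1) M is an idempotent (M² = M) if and only if c ∈ {0,1}, with c = 0 meaning M = I; (2) M is embeddable if and only if c ∈ [0,1); (3) for every positive integer n, M has an n-th root Rⁿ = M where R is a Markov matrix that is simultaneously equal-input and monotone; explicitly, for c > 0 one may take R = (1-c)^{1/n}·I + (1-(1-c)^{1/n})·(1/c)·C. -/
open Matrix

/-!
Since `C` has equal rows summing to `c`, `C * C = c • C`; so for `c > 0` the matrix `P = c⁻¹ • C` is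
idempotent and `M = (1 - c) • 1 + c • P` lives in the commutative algebra spanned by `1` and `P`,
where powers and exponentials are explicit:
`(a • 1 + (1 - a) • P) ^ n = a ^ n • 1 + (1 - a ^ n) • P` and
`exp (s • (P - 1)) = exp (-s) • 1 + (1 - exp (-s)) • P`.
Taking `a = (1 - c) ^ (1 / n)` gives the `n`-th roots, and `s = -log (1 - c)` a generator when
`c < 1`. For `c = 1`, `M = C` has equal rows, hence is singular and not an exponential.
Idempotency reduces to `M * M - M = (1 - c) • (C - c • 1)`, and an equal-row matrix is a multiple
`c • 1` of the identity only if `c = 0`.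
-/

open scoped Nat

namespace IsIdempotentElem

theorem smul_one_add_sub_smul_pow {R A : Type*} [CommRing R] [Ring A] [Algebra R A] {P : A}
    (hP : IsIdempotentElem P) (a : R) (n : ℕ) :
    (a • (1 : A) + (1 - a) • P) ^ n = a ^ n • 1 + (1 - a ^ n) • P := by
  induction n with
  | zero => simp
  | succ n ih =>
    rw [pow_succ, ih]
    simp only [add_mul, mul_add, smul_mul_smul_comm, one_mul, mul_one, hP.eq, pow_succ]
    module

variable {A : Type*} [NormedRing A] [NormedAlgebra ℝ A] [CompleteSpace A] {P : A}

theorem exp_smul (hP : IsIdempotentElem P) (t : ℝ) :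
    NormedSpace.exp (t • P) = 1 + (Real.exp t - 1) • P := by
  have hseries :=
    (hasSum_nat_add_iff' 1).mpr (NormedSpace.exp_series_hasSum_exp' (𝕂 := ℝ) (t • P))
  have hreal := (hasSum_nat_add_iff' 1).mpr (NormedSpace.expSeries_div_hasSum_exp t)
  simp only [Finset.sum_range_one, pow_zero, Nat.factorial_zero, Nat.cast_one, inv_one, one_smul,
    div_one, ← Real.exp_eq_exp_ℝ] at hseries hreal
  have hterm : ∀ n : ℕ,
      ((n + 1)! ⁻¹ : ℝ) • (t • P) ^ (n + 1) = (t ^ (n + 1) / (n + 1)!) • P := by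
    intro n
    rw [smul_pow, hP.pow_succ_eq, smul_smul, inv_mul_eq_div]
  simp only [hterm] at hseries
  rw [← sub_eq_iff_eq_add', hseries.unique (hreal.smul_const P)]

theorem exp_smul_sub_one (hP : IsIdempotentElem P) (s : ℝ) :
    NormedSpace.exp (s • (P - 1)) = Real.exp (-s) • 1 + (1 - Real.exp (-s)) • P := by
  rw [show s • (P - 1) = (-s) • (1 - P) by module, hP.one_sub.exp_smul]
  module

end IsIdempotentElem

namespace Matrix

variable {ι : Type*} [Fintype ι] {C : Matrix ι ι ℝ} {c : ℝ}

theorem mul_self_eq_smul_of_rows_eq (hrows : ∀ i i', C i = C i') (hc : ∀ i, ∑ j, C i j = c) :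
    C * C = c • C := by
  ext i j
  simp only [mul_apply, smul_apply, smul_eq_mul, ← hc i, Finset.sum_mul]
  exact Finset.sum_congr rfl fun k _ => by rw [hrows k i]

theorem eq_zero_of_nonneg_of_rowSum_eq_zero (hC : ∀ i j, 0 ≤ C i j) (hc : ∀ i, ∑ j, C i j = 0) :
    C = 0 := by
  ext i j
  exact (Finset.sum_eq_zero_iff_of_nonneg fun k _ => hC i k).mp (hc i) j (Finset.mem_univ j)

theorem isIdempotentElem_inv_smul_of_rows_eq (hrows : ∀ i i', C i = C i')
    (hc : ∀ i, ∑ j, C i j = c) (hc0 : c ≠ 0) : IsIdempotentElem (c⁻¹ • C) := by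
  rw [IsIdempotentElem, smul_mul_smul_comm, mul_self_eq_smul_of_rows_eq hrows hc, smul_smul,
    mul_assoc, inv_mul_cancel₀ hc0, mul_one]

variable [DecidableEq ι]

theorem eq_smul_one_iff_of_rows_eq [Nontrivial ι] (hC : ∀ i j, 0 ≤ C i j)
    (hrows : ∀ i i', C i = C i') (hc : ∀ i, ∑ j, C i j = c) : C = c • 1 ↔ c = 0 := by
  constructor
  · intro h
    obtain ⟨i, j, hij⟩ := exists_pair_ne ι
    have hii : C i i = c := by simpa using congr_fun₂ h i i
    have hji : C j i = 0 := by simpa [one_apply_ne hij.symm] using congr_fun₂ h j i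
    rw [← hii, hrows i j, hji]
  · rintro rfl
    simpa using eq_zero_of_nonneg_of_rowSum_eq_zero hC hc

-- `NormedSpace.exp` depends only on the topology, so any algebra norm on matrices will do.
theorem exp_smul_sub_one_of_isIdempotentElem {P : Matrix ι ι ℝ} (hP : IsIdempotentElem P)
    (s : ℝ) : NormedSpace.exp (s • (P - 1)) = Real.exp (-s) • 1 + (1 - Real.exp (-s)) • P :=
  open scoped Norms.Operator in hP.exp_smul_sub_one s

theorem one_sub_smul_one_add_mul_self_eq_iff [Nontrivial ι] (hC : ∀ i j, 0 ≤ C i j)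
    (hrows : ∀ i i', C i = C i') (hc : ∀ i, ∑ j, C i j = c) :
    ((1 - c) • 1 + C) * ((1 - c) • 1 + C) = (1 - c) • 1 + C ↔ c = 0 ∨ c = 1 := by
  have hsq : ((1 - c) • 1 + C) * ((1 - c) • 1 + C) - ((1 - c) • 1 + C)
      = (1 - c) • (C - c • 1) := by
    simp only [add_mul, mul_add, smul_mul_assoc, mul_smul_comm, one_mul, mul_one,
      mul_self_eq_smul_of_rows_eq hrows hc]
    module
  rw [← sub_eq_zero, hsq, smul_eq_zero, sub_eq_zero, sub_eq_zero,
    eq_smul_one_iff_of_rows_eq hC hrows hc, eq_comm, or_comm]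

theorem one_sub_smul_one_add_eq_one_iff [Nontrivial ι] (hC : ∀ i j, 0 ≤ C i j)
    (hrows : ∀ i i', C i = C i') (hc : ∀ i, ∑ j, C i j = c) :
    (1 - c) • 1 + C = 1 ↔ c = 0 := by
  rw [← eq_smul_one_iff_of_rows_eq hC hrows hc, ← eq_sub_iff_add_eq',
    show (1 : Matrix ι ι ℝ) - (1 - c) • 1 = c • 1 by module]

end Matrix

section EqualInput

variable {d : ℕ} {C : Matrix (Fin d) (Fin d) ℝ} {c : ℝ}

theorem isMarkov_one_sub_smul_one_add (hC : ∀ i j, 0 ≤ C i j) (hc : ∀ i, ∑ j, C i j = c)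
    (hc1 : c ≤ 1) : IsMarkov ((1 - c) • 1 + C) := by
  refine ⟨fun i j => ?_, fun i => ?_⟩
  · have := hC i j
    rw [Matrix.add_apply, Matrix.smul_apply, one_apply, smul_eq_mul]
    split_ifs <;> linarith
  · simp [Finset.sum_add_distrib, hc i, one_apply]

theorem isMonotone_one_sub_smul_one_add (hrows : ∀ i i', C i = C i') (hc1 : c ≤ 1) :
    IsMonotone ((1 - c) • 1 + C) := by
  intro i j hij m
  simp only [Matrix.add_apply, Finset.sum_add_distrib, hrows i j, Matrix.smul_apply, one_apply,
    smul_eq_mul, mul_ite, mul_one, mul_zero, Finset.sum_ite_eq, Finset.mem_Ici]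
  gcongr
  split_ifs with hmi hmj
  · rfl
  · exact absurd (hmi.trans hij) hmj
  · linarith
  · rfl

theorem not_isEmbeddable_of_row_eq {M : Matrix (Fin d) (Fin d) ℝ} {i j : Fin d} (hij : i ≠ j)
    (h : M i = M j) : ¬ IsEmbeddable M := by
  rintro ⟨Q, -, rfl⟩
  have hdet := (isUnit_iff_isUnit_det _).mp (isUnit_exp Q)
  rw [det_zero_of_row_eq hij h] at hdet
  exact not_isUnit_zero hdet

theorem isEmbeddable_one_sub_smul_one_add (hC : ∀ i j, 0 ≤ C i j) (hrows : ∀ i i', C i = C i')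
    (hc : ∀ i, ∑ j, C i j = c) (hc0 : 0 ≤ c) (hc1 : c < 1) :
    IsEmbeddable ((1 - c) • 1 + C) := by
  rcases hc0.eq_or_lt with rfl | hcpos
  · refine ⟨0, ⟨fun _ _ _ => le_rfl, fun _ => by simp⟩, ?_⟩
    simp [eq_zero_of_nonneg_of_rowSum_eq_zero hC hc]
  set s := -Real.log (1 - c)
  have hs : 0 ≤ s := neg_nonneg.mpr (Real.log_nonpos (by linarith) (by linarith))
  refine ⟨s • (c⁻¹ • C - 1), ⟨fun i j hij => ?_, fun i => ?_⟩, ?_⟩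
  · simpa [one_apply_ne hij] using mul_nonneg hs (mul_nonneg (inv_nonneg.mpr hc0) (hC i j))
  · simp [mul_sub, ← Finset.mul_sum, Finset.sum_sub_distrib, hc i, hcpos.ne', one_apply]
  · rw [exp_smul_sub_one_of_isIdempotentElem
      (isIdempotentElem_inv_smul_of_rows_eq hrows hc hcpos.ne'), neg_neg,
      Real.exp_log (by linarith), sub_sub_cancel, smul_inv_smul₀ hcpos.ne']

theorem one_sub_smul_one_add_root_pow (hrows : ∀ i i', C i = C i') (hc : ∀ i, ∑ j, C i j = c)
    (hcpos : 0 < c) (hc1 : c ≤ 1) {n : ℕ} (hn : n ≠ 0) :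
    ((1 - c) ^ ((n : ℝ)⁻¹) • (1 : Matrix (Fin d) (Fin d) ℝ)
        + (1 - (1 - c) ^ ((n : ℝ)⁻¹)) • (c⁻¹ • C)) ^ n = (1 - c) • 1 + C := by
  rw [(isIdempotentElem_inv_smul_of_rows_eq hrows hc hcpos.ne').smul_one_add_sub_smul_pow,
    Real.rpow_inv_natCast_pow (by linarith) hn, sub_sub_cancel, smul_inv_smul₀ hcpos.ne']

theorem exists_one_sub_smul_one_add_root (hC : ∀ i j, 0 ≤ C i j) (hrows : ∀ i i', C i = C i')
    (hc : ∀ i, ∑ j, C i j = c) (hc0 : 0 ≤ c) (hc1 : c ≤ 1) {n : ℕ} (hn : n ≠ 0) :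
    ∃ R : Matrix (Fin d) (Fin d) ℝ,
      IsMarkov R ∧ IsMonotone R ∧ IsEqualInput R ∧ R ^ n = (1 - c) • 1 + C := by
  rcases hc0.eq_or_lt with rfl | hcpos
  · refine ⟨(1 - 0) • 1 + C, isMarkov_one_sub_smul_one_add hC hc zero_le_one,
      isMonotone_one_sub_smul_one_add hrows zero_le_one, ⟨0, C, hC, hrows, hc, rfl⟩, ?_⟩
    simp [eq_zero_of_nonneg_of_rowSum_eq_zero hC hc]
  set r := (1 - c) ^ ((n : ℝ)⁻¹)
  have hr0 : 0 ≤ r := Real.rpow_nonneg (by linarith) _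
  have hr1 : r ≤ 1 := Real.rpow_le_one (by linarith) (by linarith) (by positivity)
  set C' := (1 - r) • (c⁻¹ • C)
  have hC' : ∀ i j, 0 ≤ C' i j := fun i j =>
    mul_nonneg (by linarith) (mul_nonneg (inv_nonneg.mpr hc0) (hC i j))
  have hrows' : ∀ i i', C' i = C' i' := fun i i' =>
    congrArg (fun v => (1 - r) • c⁻¹ • v) (hrows i i')
  have hc' : ∀ i, ∑ j, C' i j = 1 - r := fun i => by
    simp [C', ← Finset.mul_sum, hc i, hcpos.ne']
  have hR : r • 1 + C' = (1 - (1 - r)) • 1 + C' := by rw [sub_sub_cancel]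
  refine ⟨r • 1 + C', ?_, ?_, ⟨1 - r, C', hC', hrows', hc', hR⟩,
    one_sub_smul_one_add_root_pow hrows hc hcpos hc1 hn⟩
  · rw [hR]
    exact isMarkov_one_sub_smul_one_add hC' hc' (by linarith)
  · rw [hR]
    exact isMonotone_one_sub_smul_one_add hrows' (by linarith)

end EqualInput

/-- an equal-input matrix `M = (1-c)·I + C` with `c ∈ [0,1]` is
a monotone Markov matrix; it is idempotent iff `c ∈ {0,1}` (with `c = 0` iff
`M = I`), embeddable iff `c < 1`, and for every `n ≥ 1` it has a Markov
`n`-th root that is simultaneously equal-input and monotone, explicitly given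
for `c > 0` by `R = (1-c)^{1/n}·I + (1-(1-c)^{1/n})·(1/c)·C`. -/
theorem stmt_12 {d : ℕ} (hd : 2 ≤ d)
    (C : Matrix (Fin d) (Fin d) ℝ)
    (hCnonneg : ∀ i j, 0 ≤ C i j)
    (hCrows : ∀ i i', C i = C i')
    (c : ℝ) (hc : ∀ i, ∑ j, C i j = c)
    (hc0 : 0 ≤ c) (hc1 : c ≤ 1)
    (M : Matrix (Fin d) (Fin d) ℝ)
    (hM : M = (1 - c) • (1 : Matrix (Fin d) (Fin d) ℝ) + C) :
    (IsMarkov M ∧ IsMonotone M) ∧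
    (M * M = M ↔ c = 0 ∨ c = 1) ∧
    (c = 0 ↔ M = 1) ∧
    (IsEmbeddable M ↔ c < 1) ∧
    (∀ n : ℕ, 1 ≤ n →
      ∃ R : Matrix (Fin d) (Fin d) ℝ,
        IsMarkov R ∧ IsMonotone R ∧ IsEqualInput R ∧ R ^ n = M) ∧
    (0 < c → ∀ n : ℕ, 1 ≤ n →
      (((1 - c) ^ ((n : ℝ)⁻¹)) • (1 : Matrix (Fin d) (Fin d) ℝ)
          + (1 - (1 - c) ^ ((n : ℝ)⁻¹)) • (c⁻¹ • C)) ^ n = M) := by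
  have : Nontrivial (Fin d) := Fin.nontrivial_iff_two_le.mpr hd
  subst hM
  refine ⟨⟨isMarkov_one_sub_smul_one_add hCnonneg hc hc1,
      isMonotone_one_sub_smul_one_add hCrows hc1⟩,
    one_sub_smul_one_add_mul_self_eq_iff hCnonneg hCrows hc,
    (one_sub_smul_one_add_eq_one_iff hCnonneg hCrows hc).symm, ⟨fun hemb => ?_,
    isEmbeddable_one_sub_smul_one_add hCnonneg hCrows hc hc0⟩,
    fun n hn => exists_one_sub_smul_one_add_root hCnonneg hCrows hc hc0 hc1 (by omega),
    fun hcpos n hn => one_sub_smul_one_add_root_pow hCrows hc hcpos hc1 (by omega)⟩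
  refine hc1.lt_of_ne fun hc1 => ?_
  subst hc1
  obtain ⟨i, j, hij⟩ := exists_pair_ne (Fin d)
  exact not_isEmbeddable_of_row_eq hij (by simpa using hCrows i j) hemb
end

section
/- Let d ≥ 2 and let M = (1-c)·I + C be a d×d equal-input Markov matrix with summatory parameter c. Then M is monotone if and only if c ∈ [0,1]. Moreover, the set of monotone equal-input Markov matrices is convex, with exactly the d+1 extreme points E₁, …, E_d and I, where E_i is the Markov matrix all of whose rows equal the standard basis vector e_i. -/
open Matrix

/-! Write the common row of `C` as `v`. The tail sum from column `m` of row `i` of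
`(1 - c) • 1 + C` is `(1 - c)·[m ≤ i] + ∑_{k ≥ m} v k`, so monotonicity amounts to `c ≤ 1`.
The monotone equal-input Markov matrices are therefore the matrices `(1 - ∑ v) • 1 + C` with
`v ≥ 0` and `∑ v ≤ 1`, i.e. the convex combinations of `I, E₁, …, E_d`. These generators are
extreme points because all their entries are `0` or `1`, the extreme points of `[0, 1]`. -/

open Set

section

variable {d : ℕ}

lemma IsMarkov.le_one {M : Matrix (Fin d) (Fin d) ℝ} (hM : IsMarkov M) (i j : Fin d) :
    M i j ≤ 1 :=
  hM.2 i ▸ Finset.single_le_sum (fun k _ => hM.1 i k) (Finset.mem_univ j)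

lemma mem_extremePoints_of_isMarkov_of_entries_zero_or_one
    {A : Set (Matrix (Fin d) (Fin d) ℝ)} (hA : ∀ M ∈ A, IsMarkov M)
    {X : Matrix (Fin d) (Fin d) ℝ} (hXA : X ∈ A) (hX : ∀ i j, X i j = 0 ∨ X i j = 1) :
    X ∈ A.extremePoints ℝ := by
  have hbox : A ⊆ univ.pi fun _ => univ.pi fun _ => Icc (0 : ℝ) 1 := fun M hM i _ j _ =>
    ⟨(hA M hM).1 i j, (hA M hM).le_one i j⟩
  have hXbox : (X : Fin d → Fin d → ℝ) ∈
      (univ.pi fun _ : Fin d => univ.pi fun _ : Fin d => Icc (0 : ℝ) 1).extremePoints ℝ := by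
    simp only [extremePoints_pi, extremePoints_Icc zero_le_one]
    exact fun i _ j _ => hX i j
  exact inter_extremePoints_subset_extremePoints_of_subset hbox ⟨hXA, hXbox⟩

lemma Matrix.eq_replicateRow_of_rows_eq {m n α : Type*} {C : Matrix m n α}
    (h : ∀ i i', C i = C i') (i₀ : m) : C = replicateRow m (C i₀) := by
  ext i j
  rw [h i i₀, replicateRow_apply]

lemma sum_Ici_smul_one_add_replicateRow (a : ℝ) (v : Fin d → ℝ) (i m : Fin d) :
    ∑ k ∈ Finset.Ici m, (a • (1 : Matrix (Fin d) (Fin d) ℝ) + replicateRow (Fin d) v) i k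
      = (if m ≤ i then a else 0) + ∑ k ∈ Finset.Ici m, v k := by
  simp [Finset.sum_add_distrib, one_apply, replicateRow_apply]

lemma isMonotone_smul_one_add_replicateRow_iff (hd : 2 ≤ d) (a : ℝ) (v : Fin d → ℝ) :
    IsMonotone (a • (1 : Matrix (Fin d) (Fin d) ℝ) + replicateRow (Fin d) v) ↔ 0 ≤ a := by
  simp only [IsMonotone, sum_Ici_smul_one_add_replicateRow, add_le_add_iff_right]
  constructor
  · intro h
    simpa [Fin.le_def] using h ⟨0, by omega⟩ ⟨1, by omega⟩ (by simp [Fin.le_def]) ⟨1, by omega⟩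
  · intro ha i j hij m
    split_ifs with hmi hmj hmj <;> first | rfl | exact ha | exact absurd (hmi.trans hij) hmj

lemma isMonotone_one_sub_smul_one_add_iff (hd : 2 ≤ d) {C : Matrix (Fin d) (Fin d) ℝ} {c : ℝ}
    (hC : ∀ i j, 0 ≤ C i j) (hrows : ∀ i i', C i = C i') (hsum : ∀ i, ∑ j, C i j = c) :
    IsMonotone ((1 - c) • (1 : Matrix (Fin d) (Fin d) ℝ) + C) ↔ 0 ≤ c ∧ c ≤ 1 := by
  have i₀ : Fin d := ⟨0, by omega⟩
  rw [C.eq_replicateRow_of_rows_eq hrows i₀, isMonotone_smul_one_add_replicateRow_iff hd,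
    sub_nonneg]
  exact ⟨fun h => ⟨hsum i₀ ▸ Finset.sum_nonneg fun j _ => hC i₀ j, h⟩, And.right⟩

/-- `(1 - c) • I + C` with every row of `C` equal to `v`, and `c = ∑ v`. -/
def equalInputOf (v : Fin d → ℝ) : Matrix (Fin d) (Fin d) ℝ :=
  (1 - ∑ j, v j) • 1 + replicateRow (Fin d) v

lemma isMarkov_equalInputOf {v : Fin d → ℝ} (hv : ∀ j, 0 ≤ v j) (hsum : ∑ j, v j ≤ 1) :
    IsMarkov (equalInputOf v) := by
  refine ⟨fun i j => ?_, fun i => ?_⟩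
  · by_cases hij : i = j <;> simp [equalInputOf, one_apply, hij] <;> linarith [hv j]
  · simp [equalInputOf, one_apply, Finset.sum_add_distrib]

lemma isEqualInput_equalInputOf {v : Fin d → ℝ} (hv : ∀ j, 0 ≤ v j) :
    IsEqualInput (equalInputOf v) :=
  ⟨_, _, fun _ j => hv j, fun _ _ => rfl, fun _ => rfl, rfl⟩

lemma isMonotone_equalInputOf_iff (hd : 2 ≤ d) (v : Fin d → ℝ) :
    IsMonotone (equalInputOf v) ↔ ∑ j, v j ≤ 1 := by
  rw [equalInputOf, isMonotone_smul_one_add_replicateRow_iff hd, sub_nonneg]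

lemma smul_equalInputOf_add_smul_equalInputOf {a b : ℝ} (hab : a + b = 1) (v w : Fin d → ℝ) :
    a • equalInputOf v + b • equalInputOf w = equalInputOf (a • v + b • w) := by
  ext i j
  by_cases hij : i = j
  · simp [equalInputOf, hij, Finset.sum_add_distrib, ← Finset.mul_sum]
    linear_combination hab
  · simp [equalInputOf, one_apply, hij]

lemma replicateRow_eq_sum_smul_Ecol (v : Fin d → ℝ) :
    replicateRow (Fin d) v = ∑ k, v k • Ecol k := by
  ext i j
  simp [Matrix.sum_apply, Ecol]

lemma equalInputOf_zero : equalInputOf (0 : Fin d → ℝ) = 1 := by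
  simp [equalInputOf]

lemma equalInputOf_single (k : Fin d) : equalInputOf (Pi.single k 1) = Ecol k := by
  ext i j
  simp [equalInputOf, Ecol, Pi.single_apply]

def monotoneEqualInput (d : ℕ) : Set (Matrix (Fin d) (Fin d) ℝ) :=
  {M | IsMarkov M ∧ IsEqualInput M ∧ IsMonotone M}

lemma mem_monotoneEqualInput_iff (hd : 2 ≤ d) {M : Matrix (Fin d) (Fin d) ℝ} :
    M ∈ monotoneEqualInput d ↔
      ∃ v : Fin d → ℝ, (∀ j, 0 ≤ v j) ∧ ∑ j, v j ≤ 1 ∧ equalInputOf v = M := by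
  constructor
  · rintro ⟨-, ⟨c, C, hC, hrows, hsum, rfl⟩, hmono⟩
    have i₀ : Fin d := ⟨0, by omega⟩
    have hM : (1 - c) • 1 + C = equalInputOf (C i₀) := by
      rw [equalInputOf, hsum i₀, ← C.eq_replicateRow_of_rows_eq hrows i₀]
    rw [hM, isMonotone_equalInputOf_iff hd] at hmono
    exact ⟨C i₀, hC i₀, hmono, hM.symm⟩
  · rintro ⟨v, hv, hsum, rfl⟩
    exact ⟨isMarkov_equalInputOf hv hsum, isEqualInput_equalInputOf hv,
      (isMonotone_equalInputOf_iff hd v).2 hsum⟩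

lemma convex_monotoneEqualInput (hd : 2 ≤ d) : Convex ℝ (monotoneEqualInput d) := by
  intro M hM N hN a b ha hb hab
  obtain ⟨v, hv, hvsum, rfl⟩ := (mem_monotoneEqualInput_iff hd).1 hM
  obtain ⟨w, hw, hwsum, rfl⟩ := (mem_monotoneEqualInput_iff hd).1 hN
  refine (mem_monotoneEqualInput_iff hd).2 ⟨a • v + b • w, fun j => ?_, ?_,
    (smul_equalInputOf_add_smul_equalInputOf hab v w).symm⟩
  · simpa using add_nonneg (mul_nonneg ha (hv j)) (mul_nonneg hb (hw j))
  · simp only [Pi.add_apply, Pi.smul_apply, smul_eq_mul, Finset.sum_add_distrib, ← Finset.mul_sum]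
    linarith [mul_le_mul_of_nonneg_left hvsum ha, mul_le_mul_of_nonneg_left hwsum hb]

lemma equalInputOf_mem_convexHull {v : Fin d → ℝ} (hv : ∀ j, 0 ≤ v j) (hsum : ∑ j, v j ≤ 1) :
    equalInputOf v ∈ convexHull ℝ (insert 1 (range Ecol)) := by
  have hcomb : equalInputOf v =
      ∑ o : Option (Fin d), o.elim (1 - ∑ j, v j) v • o.elim 1 Ecol := by
    simp [Fintype.sum_option, equalInputOf, replicateRow_eq_sum_smul_Ecol]
  rw [hcomb]
  refine (convex_convexHull ℝ _).sum_mem (fun o _ => ?_) ?_ (fun o _ => subset_convexHull ℝ _ ?_)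
  · cases o <;> simp [hsum, hv]
  · simp [Fintype.sum_option]
  · cases o <;> simp

lemma monotoneEqualInput_eq_convexHull (hd : 2 ≤ d) :
    monotoneEqualInput d = convexHull ℝ (insert 1 (range Ecol)) := by
  refine subset_antisymm (fun M hM => ?_) (convexHull_min ?_ (convex_monotoneEqualInput hd))
  · obtain ⟨v, hv, hsum, rfl⟩ := (mem_monotoneEqualInput_iff hd).1 hM
    exact equalInputOf_mem_convexHull hv hsum
  · rintro _ (rfl | ⟨k, rfl⟩)
    · exact (mem_monotoneEqualInput_iff hd).2 ⟨0, fun _ => le_rfl, by simp, equalInputOf_zero⟩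
    · exact (mem_monotoneEqualInput_iff hd).2 ⟨Pi.single k 1,
        fun j => by simp [Pi.single_apply, apply_ite], by simp, equalInputOf_single k⟩

lemma extremePoints_monotoneEqualInput (hd : 2 ≤ d) :
    (monotoneEqualInput d).extremePoints ℝ = insert 1 (range Ecol) := by
  refine subset_antisymm ?_ ?_
  · rw [monotoneEqualInput_eq_convexHull hd]
    exact extremePoints_convexHull_subset
  · rintro X hX
    refine mem_extremePoints_of_isMarkov_of_entries_zero_or_one (fun M hM => hM.1)
      (monotoneEqualInput_eq_convexHull hd ▸ subset_convexHull ℝ _ hX) fun i j => ?_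
    rcases hX with rfl | ⟨k, rfl⟩
    · by_cases hij : i = j <;> simp [one_apply, hij]
    · by_cases hjk : j = k <;> simp [Ecol, hjk]

lemma ncard_insert_one_range_Ecol (hd : 2 ≤ d) :
    (insert (1 : Matrix (Fin d) (Fin d) ℝ) (range Ecol)).ncard = d + 1 := by
  have hinj : Function.Injective (Ecol (d := d)) := fun k l hkl => by
    simpa [Ecol] using congrFun (congrFun hkl k) k
  have hone : (1 : Matrix (Fin d) (Fin d) ℝ) ∉ range Ecol := by
    rintro ⟨k, hk⟩
    have : Nontrivial (Fin d) := Fin.nontrivial_iff_two_le.2 hd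
    obtain ⟨i, hik⟩ := exists_ne k
    simpa [Ecol, one_apply, hik] using congrFun (congrFun hk i) k
  rw [ncard_insert_of_notMem hone (finite_range _), ← image_univ,
    ncard_image_of_injective _ hinj, ncard_univ, Nat.card_fin]

end

/-- an equal-input Markov matrix is monotone iff its summatory
parameter lies in `[0,1]`; the set of monotone equal-input Markov matrices is
convex with precisely the `d+1` extreme points `E₁, …, E_d, I`. -/
theorem stmt_13 {d : ℕ} (hd : 2 ≤ d) :
    (∀ (C : Matrix (Fin d) (Fin d) ℝ) (c : ℝ) (M : Matrix (Fin d) (Fin d) ℝ),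
      (∀ i j, 0 ≤ C i j) → (∀ i i', C i = C i') → (∀ i, ∑ j, C i j = c) →
      M = (1 - c) • (1 : Matrix (Fin d) (Fin d) ℝ) + C → IsMarkov M →
      (IsMonotone M ↔ (0 ≤ c ∧ c ≤ 1))) ∧
    Convex ℝ {M : Matrix (Fin d) (Fin d) ℝ | IsMarkov M ∧ IsEqualInput M ∧ IsMonotone M} ∧
    Set.extremePoints ℝ
        {M : Matrix (Fin d) (Fin d) ℝ | IsMarkov M ∧ IsEqualInput M ∧ IsMonotone M}
      = insert (1 : Matrix (Fin d) (Fin d) ℝ) (Set.range (Ecol (d := d))) ∧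
    (insert (1 : Matrix (Fin d) (Fin d) ℝ) (Set.range (Ecol (d := d)))).ncard = d + 1 := by
  refine ⟨fun C c M hC hrows hsum hM _ => ?_, convex_monotoneEqualInput hd,
    extremePoints_monotoneEqualInput hd, ncard_insert_one_range_Ecol hd⟩
  rw [hM]
  exact isMonotone_one_sub_smul_one_add_iff hd hC hrows hsum
end

section
/- Let P₀ and P be d×d Markov matrices with P₀² = P₀ and P₀·P = P·P₀ = P, and for t ≥ 0 set M(t) = e^{-t}·(P₀ - I + exp(t·P)). Then: (1) M(0) = P₀; (2) M(t)·M(s) = M(t+s) for all t,s ≥ 0; (3) M(t) is a Markov matrix for every t ≥ 0; (4) M(t) = e^{-t}·(P₀ - I) + exp(t·A) = P₀·exp(t·A) for all t ≥ 0, where A = P - I; (5) P = P₀ if and only if M(t) = P₀ for all t ≥ 0; (6) for t ≥ 0, M(t) is idempotent if and only if M(t) = P₀. -/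
/-!
Since `P₀ P = P`, the factor `P₀ - 1` annihilates `P`, so `(P₀ - 1) exp(tP) = P₀ - 1` and
`M(t) = P₀ exp(t(P - 1))`. As `P₀` is idempotent and commutes with `P`, this gives the semigroup
law, and cancelling the invertible `exp(t(P - 1))` turns idempotence of `M(t)` into `M(t) = P₀`.
Row sums are preserved because `P - 1` annihilates the all-ones matrix, and entries stay
nonnegative because `exp(tP) ≥ 1` entrywise for `t ≥ 0`. Finally `M'(0) = P - P₀`, so `M` can
only be constant when `P = P₀`.
-/

open Matrix

open NormedSpace
open scoped Nat

/- Only a topological algebra structure is required, so that on matrices this is literally the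
expression of the statement, with no choice of norm. -/
noncomputable def poissonFamily {𝔸 : Type*} [Ring 𝔸] [Algebra ℝ 𝔸] [TopologicalSpace 𝔸]
    [IsTopologicalRing 𝔸] (p₀ p : 𝔸) (t : ℝ) : 𝔸 :=
  Real.exp (-t) • (p₀ - 1 + exp (t • p))

@[simp]
theorem poissonFamily_zero {𝔸 : Type*} [Ring 𝔸] [Algebra ℝ 𝔸] [TopologicalSpace 𝔸]
    [IsTopologicalRing 𝔸] (p₀ p : 𝔸) : poissonFamily p₀ p 0 = p₀ := by
  simp [poissonFamily]

section BanachAlgebra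

variable {𝔸 : Type*} [NormedRing 𝔸] [CompleteSpace 𝔸]

section Rat

variable [NormedAlgebra ℚ 𝔸]

theorem mul_exp_eq_self_of_mul_eq_zero {b c : 𝔸} (h : c * b = 0) : c * exp b = c := by
  simpa [SemiconjBy] using (show SemiconjBy c b 0 by simp [SemiconjBy, h]).exp_right

theorem exp_mul_eq_self_of_mul_eq_zero {b c : 𝔸} (h : b * c = 0) : exp b * c = c := by
  simpa [SemiconjBy] using ((show SemiconjBy c 0 b by simp [SemiconjBy, h]).exp_right).symm

end Rat

variable [NormedAlgebra ℝ 𝔸] {p₀ p : 𝔸}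

theorem hasDerivAt_poissonFamily_zero (p₀ p : 𝔸) :
    HasDerivAt (poissonFamily p₀ p) (p - p₀) 0 := by
  have h := ((Real.hasDerivAt_exp _).comp 0 (hasDerivAt_neg 0)).smul
    ((hasDerivAt_exp_smul_const p (0 : ℝ)).const_add (p₀ - 1))
  exact h.congr_deriv (by simp; abel)

variable [NormedAlgebra ℚ 𝔸]

theorem exp_add_smul (a : 𝔸) (s t : ℝ) : exp ((s + t) • a) = exp (s • a) * exp (t • a) := by
  rw [add_smul, exp_add_of_commute (((Commute.refl a).smul_left s).smul_right t)]

theorem exp_smul_sub_one (a : 𝔸) (t : ℝ) :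
    exp (t • (a - 1)) = Real.exp (-t) • exp (t • a) := by
  have hcomm : Commute (t • a) (algebraMap ℝ 𝔸 (-t)) := (Algebra.commutes _ _).symm
  rw [smul_sub, sub_eq_add_neg, ← neg_smul, ← Algebra.algebraMap_eq_smul_one,
    exp_add_of_commute hcomm, ← algebraMap_exp_comm, ← Real.exp_eq_exp_ℝ,
    Algebra.algebraMap_eq_smul_one, mul_smul_comm, mul_one]

theorem poissonFamily_eq_smul_add_exp (p₀ p : 𝔸) (t : ℝ) :
    poissonFamily p₀ p t = Real.exp (-t) • (p₀ - 1) + exp (t • (p - 1)) := by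
  rw [poissonFamily, exp_smul_sub_one, smul_add]

theorem poissonFamily_eq_mul_exp (h : p₀ * p = p) (t : ℝ) :
    poissonFamily p₀ p t = p₀ * exp (t • (p - 1)) := by
  have hfix : (p₀ - 1) * exp (t • p) = p₀ - 1 := mul_exp_eq_self_of_mul_eq_zero <| by
    rw [mul_smul_comm, sub_mul, h, one_mul, sub_self, smul_zero]
  rw [exp_smul_sub_one, mul_smul_comm, poissonFamily, ← hfix, sub_mul, one_mul, sub_add_cancel]

theorem poissonFamily_add (hidem : p₀ * p₀ = p₀) (hp₀p : p₀ * p = p) (hpp₀ : p * p₀ = p)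
    (s t : ℝ) : poissonFamily p₀ p s * poissonFamily p₀ p t = poissonFamily p₀ p (s + t) := by
  have hcomm : Commute p₀ (exp (s • (p - 1))) :=
    ((Commute.sub_right (hp₀p.trans hpp₀.symm) (.one_right p₀)).smul_right s).exp_right
  simp only [poissonFamily_eq_mul_exp hp₀p]
  rw [exp_add_smul, mul_assoc, ← mul_assoc _ p₀, ← hcomm.eq, mul_assoc, ← mul_assoc p₀, hidem]

theorem poissonFamily_mul_self_eq_self_iff (hidem : p₀ * p₀ = p₀) (hp₀p : p₀ * p = p)
    (hpp₀ : p * p₀ = p) (t : ℝ) :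
    poissonFamily p₀ p t * poissonFamily p₀ p t = poissonFamily p₀ p t ↔
      poissonFamily p₀ p t = p₀ := by
  rw [poissonFamily_add hidem hp₀p hpp₀, poissonFamily_eq_mul_exp hp₀p,
    poissonFamily_eq_mul_exp hp₀p, exp_add_smul, ← mul_assoc,
    (NormedSpace.isUnit_exp (t • (p - 1))).mul_left_inj]

theorem poissonFamily_eq_const_iff (hidem : p₀ * p₀ = p₀) :
    p = p₀ ↔ ∀ t, 0 ≤ t → poissonFamily p₀ p t = p₀ := by
  refine ⟨?_, fun h => ?_⟩
  · rintro rfl t -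
    rw [poissonFamily_eq_mul_exp hidem]
    exact mul_exp_eq_self_of_mul_eq_zero <| by
      rw [mul_smul_comm, mul_sub, hidem, mul_one, sub_self, smul_zero]
  · have hconst : HasDerivWithinAt (poissonFamily p₀ p) 0 (Set.Ici 0) 0 :=
      (hasDerivWithinAt_const 0 _ p₀).congr (fun t ht => h t ht) (h 0 le_rfl)
    exact sub_eq_zero.mp <| (uniqueDiffOn_Ici 0 0 Set.self_mem_Ici).eq_deriv _
      (hasDerivAt_poissonFamily_zero p₀ p).hasDerivWithinAt hconst

end BanachAlgebra

namespace Matrix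

variable {m : Type*} [Fintype m]

theorem mul_ones_eq_ones_iff {α : Type*} [NonAssocSemiring α] (M : Matrix m m α) :
    M * of (fun _ _ => 1) = of (fun _ _ => 1) ↔ ∀ i, ∑ j, M i j = 1 := by
  refine ⟨fun h i => ?_, fun h => ?_⟩
  · simpa [mul_apply] using congr_fun (congr_fun h i) i
  · ext i k
    simp [mul_apply, h i]

variable [DecidableEq m]

theorem one_apply_le_exp_apply {A : Matrix m m ℝ} (hA : ∀ i j, 0 ≤ A i j) (i j : m) :
    (1 : Matrix m m ℝ) i j ≤ exp A i j := by
  -- Matrices carry no global norm; the Banach-algebra facts are used through the operator norm.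
  have hsum : HasSum (fun n => ((n !⁻¹ : ℝ) • A ^ n)) (exp A) := by
    open scoped Norms.Operator in exact exp_series_hasSum_exp' A
  simpa using le_hasSum (Pi.hasSum.mp (Pi.hasSum.mp hsum i) j) 0
    fun n _ => mul_nonneg (by positivity) (pow_apply_nonneg hA n i j)

end Matrix

theorem isMarkov_poissonFamily {d : ℕ} {P₀ P : Matrix (Fin d) (Fin d) ℝ} (hP₀ : IsMarkov P₀)
    (hP : IsMarkov P) (hPP₀ : P₀ * P = P) {t : ℝ} (ht : 0 ≤ t) :
    IsMarkov (poissonFamily P₀ P t) := by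
  refine ⟨fun i j => ?_, ?_⟩
  · have hexp := one_apply_le_exp_apply (fun i j => mul_nonneg ht (hP.1 i j)) (A := t • P) i j
    simp only [poissonFamily, Matrix.smul_apply, Matrix.add_apply, Matrix.sub_apply, smul_eq_mul]
    exact mul_nonneg (Real.exp_nonneg _) (by linarith [hP₀.1 i j])
  · have hfix : exp (t • (P - 1)) * of (fun _ _ => 1) = of (fun _ _ => (1 : ℝ)) := by
      open scoped Norms.Operator in
      exact exp_mul_eq_self_of_mul_eq_zero <| by
        rw [smul_mul_assoc, sub_mul, (mul_ones_eq_ones_iff P).2 hP.2, one_mul, sub_self,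
          smul_zero]
    have hM : poissonFamily P₀ P t = P₀ * exp (t • (P - 1)) := by
      open scoped Norms.Operator in exact poissonFamily_eq_mul_exp hPP₀ t
    rw [← mul_ones_eq_ones_iff, hM, mul_assoc, hfix, (mul_ones_eq_ones_iff P₀).2 hP₀.2]

/-- the (pseudo-)Poissonian family
`M(t) = e^{-t}(P₀ - I + exp(tP))` attached to an idempotent `P₀` and a Markov
matrix `P` with `P₀P = PP₀ = P` is a continuous monoid of Markov matrices with
neutral element `P₀`, and its further properties (1)–(6). -/
theorem stmt_15 {d : ℕ} (P₀ P : Matrix (Fin d) (Fin d) ℝ)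
    (hP₀ : IsMarkov P₀) (hP : IsMarkov P)
    (hidem : P₀ * P₀ = P₀)
    (hPP₀ : P₀ * P = P) (hP₀P : P * P₀ = P)
    (Mt : ℝ → Matrix (Fin d) (Fin d) ℝ)
    (hMt : ∀ t : ℝ, Mt t =
      Real.exp (-t) • (P₀ - 1 + NormedSpace.exp (t • P))) :
    Mt 0 = P₀ ∧
    (∀ t s : ℝ, 0 ≤ t → 0 ≤ s → Mt t * Mt s = Mt (t + s)) ∧
    (∀ t : ℝ, 0 ≤ t → IsMarkov (Mt t)) ∧
    (∀ t : ℝ, 0 ≤ t →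
      Mt t = Real.exp (-t) • (P₀ - 1) + NormedSpace.exp (t • (P - 1)) ∧
      Mt t = P₀ * NormedSpace.exp (t • (P - 1))) ∧
    (P = P₀ ↔ ∀ t : ℝ, 0 ≤ t → Mt t = P₀) ∧
    (∀ t : ℝ, 0 ≤ t → (Mt t * Mt t = Mt t ↔ Mt t = P₀)) := by
  obtain rfl : Mt = poissonFamily P₀ P := funext hMt
  open scoped Matrix.Norms.Operator in
  exact ⟨poissonFamily_zero P₀ P, fun s t _ _ => poissonFamily_add hidem hPP₀ hP₀P s t,
    fun t ht => isMarkov_poissonFamily hP₀ hP hPP₀ ht,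
    fun t _ => ⟨poissonFamily_eq_smul_add_exp P₀ P t, poissonFamily_eq_mul_exp hPP₀ t⟩,
    poissonFamily_eq_const_iff hidem,
    fun t _ => poissonFamily_mul_self_eq_self_iff hidem hPP₀ hP₀P t⟩
end

section
/- Let P₀ and P be d×d Markov matrices with P₀² = P₀ and P₀·P = P·P₀ = P, and for t ≥ 0 set M(t) = e^{-t}·(P₀ - I + exp(t·P)). Then exactly one of the following holds: either det(M(t)) > 0 for all t ≥ 0, which happens if and only if P₀ = I; or det(M(t)) = 0 for all t ≥ 0, which happens if and only if P₀ ≠ I (equivalently, P₀ is singular). -/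
open Matrix

/-!
Since `P₀ P = P`, the matrix `P₀ - I` annihilates every positive power of `P`, hence
`(P₀ - I) exp(tP) = P₀ - I` and `M(t) = e^{-t} P₀ exp(tP)`. The factor `exp(tP)` is the square of
`exp(tP/2)`, so it has positive determinant, and `det M(t)` has the sign of `det P₀`. As `P₀` is
idempotent, `det P₀ ∈ {0, 1}`, and `det P₀ = 1` forces the invertible idempotent `P₀` to be `I`.
-/

theorem NormedSpace.mul_exp_eq_self_of_mul_eq_zero {𝔸 : Type*} [NormedRing 𝔸]
    [NormedAlgebra ℚ 𝔸] [CompleteSpace 𝔸] {a b : 𝔸} (h : a * b = 0) : a * exp b = a := by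
  rw [exp_eq_tsum_rat, ← (expSeries_summable' (𝕂 := ℚ) b).tsum_mul_left a, tsum_eq_single 0]
  · simp
  · rintro (_ | n) hn
    · contradiction
    · rw [mul_smul_comm, pow_succ', ← mul_assoc, h, zero_mul, smul_zero]

namespace Matrix

open NormedSpace

variable {m : Type*} [Fintype m] [DecidableEq m]

theorem mul_exp_eq_self_of_mul_eq_zero {𝔸 : Type*} [NormedRing 𝔸] [NormedAlgebra ℚ 𝔸]
    [CompleteSpace 𝔸] {A B : Matrix m m 𝔸} (h : A * B = 0) : A * exp B = A :=
  -- matrices carry no global norm; any submultiplicative one, here the L∞ operator norm, will do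
  @NormedSpace.mul_exp_eq_self_of_mul_eq_zero _ Matrix.linftyOpNormedRing
    Matrix.linftyOpNormedAlgebra (inferInstanceAs (CompleteSpace (m → m → 𝔸))) _ _ h

theorem sub_one_add_exp_eq_mul_exp {𝔸 : Type*} [NormedRing 𝔸] [NormedAlgebra ℚ 𝔸]
    [CompleteSpace 𝔸] {A B : Matrix m m 𝔸} (h : A * B = B) : A - 1 + exp B = A * exp B := by
  have hannih : (A - 1) * B = 0 := by rw [sub_mul, one_mul, h, sub_self]
  rw [← mul_exp_eq_self_of_mul_eq_zero hannih, sub_mul, one_mul, sub_add_cancel]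

theorem det_exp_pos (A : Matrix m m ℝ) : 0 < (exp A).det := by
  have hsq : exp A = exp ((2⁻¹ : ℝ) • A) ^ 2 := by
    rw [← Matrix.exp_nsmul, ← Nat.cast_smul_eq_nsmul ℝ, smul_smul]
    norm_num
  have hne : (exp ((2⁻¹ : ℝ) • A)).det ≠ 0 :=
    ((isUnit_iff_isUnit_det _).mp (Matrix.isUnit_exp ((2⁻¹ : ℝ) • A))).ne_zero
  rw [hsq, det_pow]
  positivity

variable {K : Type*} [Field K] {A : Matrix m m K}

theorem IsIdempotentElem.det_eq_zero_or_one (h : IsIdempotentElem A) :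
    A.det = 0 ∨ A.det = 1 :=
  IsIdempotentElem.iff_eq_zero_or_one.mp (h.map detMonoidHom)

theorem IsIdempotentElem.det_eq_zero_iff_ne_one (h : IsIdempotentElem A) :
    A.det = 0 ↔ A ≠ 1 := by
  refine ⟨fun hdet hA ↦ by simp [hA] at hdet, fun hA ↦ ?_⟩
  by_contra hdet
  have hunit : IsUnit A := (isUnit_iff_isUnit_det A).mpr (isUnit_iff_ne_zero.mpr hdet)
  exact hA ((IsIdempotentElem.iff_eq_one_of_isUnit hunit).mp h)

theorem IsIdempotentElem.det_pos_iff_eq_one [LinearOrder K] [IsStrictOrderedRing K]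
    (h : IsIdempotentElem A) : 0 < A.det ↔ A = 1 := by
  rcases h.det_eq_zero_or_one with hdet | hdet
  · simpa [hdet] using h.det_eq_zero_iff_ne_one.mp hdet
  · simp only [hdet, zero_lt_one, true_iff]
    by_contra hA
    simp [h.det_eq_zero_iff_ne_one.mpr hA] at hdet

end Matrix

theorem stmt_16_general {d : ℕ} (P₀ P : Matrix (Fin d) (Fin d) ℝ)
    (hidem : P₀ * P₀ = P₀)
    (hPP₀ : P₀ * P = P)
    (Mt : ℝ → Matrix (Fin d) (Fin d) ℝ)
    (hMt : ∀ t : ℝ, Mt t =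
      Real.exp (-t) • (P₀ - 1 + NormedSpace.exp (t • P))) :
    ((∀ t : ℝ, 0 ≤ t → 0 < (Mt t).det) ↔ P₀ = 1) ∧
    ((∀ t : ℝ, 0 ≤ t → (Mt t).det = 0) ↔ P₀ ≠ 1) ∧
    (P₀ ≠ 1 ↔ P₀.det = 0) := by
  have hP₀ : IsIdempotentElem P₀ := hidem
  set c : ℝ → ℝ := fun t ↦ Real.exp (-t) ^ d * (NormedSpace.exp (t • P)).det
  have hc : ∀ t, 0 < c t := fun t ↦ by have := det_exp_pos (t • P); positivity
  have hdet : ∀ t, (Mt t).det = c t * P₀.det := fun t ↦ by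
    rw [hMt, sub_one_add_exp_eq_mul_exp (by rw [mul_smul_comm, hPP₀]), det_smul, det_mul,
      Fintype.card_fin]
    ring
  have hdet_zero : P₀.det = 0 ↔ P₀ ≠ 1 := hP₀.det_eq_zero_iff_ne_one
  simp only [hdet, mul_pos_iff_of_pos_left (hc _), mul_eq_zero, (hc _).ne', false_or]
  refine ⟨⟨fun h ↦ hP₀.det_pos_iff_eq_one.mp (h 0 le_rfl),
      fun h _ _ ↦ hP₀.det_pos_iff_eq_one.mpr h⟩,
    ⟨fun h ↦ hdet_zero.mp (h 0 le_rfl), fun h _ _ ↦ hdet_zero.mpr h⟩, hdet_zero.symm⟩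

/-- for the family `M(t) = e^{-t}(P₀ - I + exp(tP))`, either
`det(M(t)) > 0` for all `t ≥ 0` (which happens iff `P₀ = I`), or
`det(M(t)) = 0` for all `t ≥ 0` (which happens iff `P₀ ≠ I`, equivalently
iff `P₀` is singular). -/
theorem stmt_16 {d : ℕ} (P₀ P : Matrix (Fin d) (Fin d) ℝ)
    (hP₀ : IsMarkov P₀) (hP : IsMarkov P)
    (hidem : P₀ * P₀ = P₀)
    (hPP₀ : P₀ * P = P) (hP₀P : P * P₀ = P)
    (Mt : ℝ → Matrix (Fin d) (Fin d) ℝ)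
    (hMt : ∀ t : ℝ, Mt t =
      Real.exp (-t) • (P₀ - 1 + NormedSpace.exp (t • P))) :
    ((∀ t : ℝ, 0 ≤ t → 0 < (Mt t).det) ↔ P₀ = 1) ∧
    ((∀ t : ℝ, 0 ≤ t → (Mt t).det = 0) ↔ P₀ ≠ 1) ∧
    (P₀ ≠ 1 ↔ P₀.det = 0) :=
  stmt_16_general P₀ P hidem hPP₀ Mt hMt
end

section
/- Let M be a 3×3 monotone Markov matrix. Then all complex eigenvalues of M are real; explicitly, besides the eigenvalue 1, the other two eigenvalues are (1/2)·(trace(M) - 1 ± √Δ) with discriminant Δ = (trace(M) - 1)² - 4·det(M) ≥ 0. At most one eigenvalue of M is negative, and M has a negative eigenvalue if and only if det(M) < 0. Furthermore, if Q is a 3×3 monotone Markov generator, then all eigenvalues of Q are real and nonpositive. -/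
/-!
Conjugating a `3 × 3` matrix with constant row sums `r` by the lower-triangular all-ones matrix
makes it block upper triangular with blocks `r` and a `2 × 2` matrix `B` of differences of tail
sums of consecutive rows. For a monotone Markov matrix `B` is entrywise nonnegative; for a
monotone generator `B` has nonnegative off-diagonal entries, nonpositive trace and, being
column-wise diagonally dominant, nonnegative determinant. In both cases
`disc B = (b₀₀ - b₁₁)² + 4 b₀₁ b₁₀ ≥ 0`, so the eigenvalues are real, and their signs are read
off from the trace and determinant of `B`.
-/

open Matrix Polynomial

lemma half_sub_sqrt_sq_sub_four_mul_neg_iff {t p : ℝ} (ht : 0 ≤ t) :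
    (t - √(t ^ 2 - 4 * p)) / 2 < 0 ↔ p < 0 := by
  rw [div_neg_iff, sub_neg, Real.lt_sqrt ht]
  constructor
  · rintro (⟨-, h⟩ | ⟨h, -⟩) <;> linarith
  · intro hp
    exact Or.inr ⟨by linarith, two_pos⟩

lemma half_add_sqrt_sq_sub_four_mul_nonpos {t p : ℝ} (ht : t ≤ 0) (hp : 0 ≤ p) :
    (t + √(t ^ 2 - 4 * p)) / 2 ≤ 0 := by
  have : √(t ^ 2 - 4 * p) ≤ -t := (Real.sqrt_le_left (by linarith)).2 (by nlinarith)
  linarith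

lemma Polynomial.eq_or_eq_or_eq_of_roots_eq {S : Type*} [CommRing S] [IsDomain S] {p : S[X]}
    {a b c : S} (hp : p.roots = {a, b, c}) {z : S} (hz : p.IsRoot z) : z = a ∨ z = b ∨ z = c := by
  have hp0 : p ≠ 0 := by
    rintro rfl
    simp at hp
  simpa [hp] using (mem_roots hp0).2 hz

namespace Matrix

variable {R : Type*} [CommRing R]

/-- With `T` the lower-triangular all-ones matrix, a matrix `A` with constant row sums `r`
satisfies `T⁻¹ A T = !![r, *; 0, tailDiff A]`. -/
def tailDiff {n : ℕ} (A : Matrix (Fin (n + 1)) (Fin (n + 1)) R) : Matrix (Fin n) (Fin n) R :=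
  of fun i j => ∑ k ∈ Finset.Ici j.succ, (A i.succ k - A i.castSucc k)

lemma tailDiff_fin_three (A : Matrix (Fin 3) (Fin 3) R) :
    tailDiff A = !![A 1 1 + A 1 2 - (A 0 1 + A 0 2), A 1 2 - A 0 2;
                   A 2 1 + A 2 2 - (A 1 1 + A 1 2), A 2 2 - A 1 2] := by
  have h1 : Finset.Ici (1 : Fin 3) = {1, 2} := by decide
  have h2 : Finset.Ici (2 : Fin 3) = {2} := by decide
  ext i j
  fin_cases i <;> fin_cases j <;> simp [tailDiff, h1, h2]

section RowSum

variable (A : Matrix (Fin 3) (Fin 3) R) {r : R}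

lemma apply_zero_eq_of_rowSum (hA : ∀ i, ∑ j, A i j = r) (i : Fin 3) :
    A i 0 = r - A i 1 - A i 2 := by
  linear_combination (by simpa only [Fin.sum_univ_three] using hA i : A i 0 + A i 1 + A i 2 = r)

lemma charpoly_eq_X_sub_C_mul_charpoly_tailDiff (hA : ∀ i, ∑ j, A i j = r) :
    A.charpoly = (X - C r) * (tailDiff A).charpoly := by
  nontriviality R
  rw [charpoly_fin_two, tailDiff_fin_three, trace_fin_two_of, det_fin_two_of, Matrix.charpoly,
    det_fin_three]
  simp only [charmatrix_apply, diagonal_apply, Fin.reduceEq, if_true, if_false,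
    apply_zero_eq_of_rowSum A hA, map_sub, map_add, map_mul]
  ring

lemma trace_tailDiff_of_rowSum (hA : ∀ i, ∑ j, A i j = r) : (tailDiff A).trace = A.trace - r := by
  rw [tailDiff_fin_three, trace_fin_two_of, trace_fin_three, apply_zero_eq_of_rowSum A hA 0]
  ring

lemma det_eq_mul_det_tailDiff (hA : ∀ i, ∑ j, A i j = r) : A.det = r * (tailDiff A).det := by
  rw [tailDiff_fin_three, det_fin_two_of, det_fin_three]
  simp only [apply_zero_eq_of_rowSum A hA]
  ring

end RowSum

lemma discr_nonneg_of_mul_nonneg (B : Matrix (Fin 2) (Fin 2) ℝ) (h : 0 ≤ B 0 1 * B 1 0) :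
    0 ≤ B.discr := by
  rw [discr_fin_two, trace_fin_two, det_fin_two]
  nlinarith [sq_nonneg (B 0 0 - B 1 1)]

lemma charpoly_eq_of_discr_nonneg (B : Matrix (Fin 2) (Fin 2) ℝ) (h : 0 ≤ B.discr) :
    B.charpoly = (X - C ((B.trace + √B.discr) / 2)) * (X - C ((B.trace - √B.discr) / 2)) := by
  have hsq := Real.sq_sqrt h
  have vieta (u v : ℝ) : (X - C u) * (X - C v) = X ^ 2 - C (u + v) * X + C (u * v) := by
    rw [C_add, C_mul]
    ring
  rw [discr_fin_two] at hsq ⊢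
  rw [charpoly_fin_two, vieta]
  congr 4
  · ring
  · linear_combination hsq / 4

lemma det_fin_two_nonneg_of_le_neg_diag (B : Matrix (Fin 2) (Fin 2) ℝ) (h01 : 0 ≤ B 0 1)
    (h01' : B 0 1 ≤ -B 1 1) (h10 : 0 ≤ B 1 0) (h10' : B 1 0 ≤ -B 0 0) : 0 ≤ B.det := by
  rw [det_fin_two]
  nlinarith [mul_le_mul h10' h01' h01 (h10.trans h10')]

lemma roots_charpoly_map_ofReal (A : Matrix (Fin 3) (Fin 3) ℝ) {r : ℝ}
    (hA : ∀ i, ∑ j, A i j = r) (h : 0 ≤ (tailDiff A).discr) :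
    (A.map (Complex.ofReal ·)).charpoly.roots =
      {(r : ℂ), ((((tailDiff A).trace + √(tailDiff A).discr) / 2 : ℝ) : ℂ),
        ((((tailDiff A).trace - √(tailDiff A).discr) / 2 : ℝ) : ℂ)} := by
  change (A.map Complex.ofRealHom).charpoly.roots = _
  rw [charpoly_map, charpoly_eq_X_sub_C_mul_charpoly_tailDiff A hA,
    charpoly_eq_of_discr_nonneg _ h]
  simp only [Polynomial.map_mul, Polynomial.map_sub, map_X, map_C, ← mul_assoc]
  rw [roots_mul (by simp [X_sub_C_ne_zero]), roots_mul (by simp [X_sub_C_ne_zero])]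
  simp

end Matrix

lemma IsMonotone.tailDiff_nonneg {n : ℕ} {A : Matrix (Fin (n + 1)) (Fin (n + 1)) ℝ}
    (h : IsMonotone A) (i j : Fin n) : 0 ≤ tailDiff A i j := by
  simpa [tailDiff, Finset.sum_sub_distrib] using h _ _ (Fin.castSucc_le_succ i) j.succ

lemma IsGenerator.apply_self_nonpos {d : ℕ} {Q : Matrix (Fin d) (Fin d) ℝ} (hQ : IsGenerator Q)
    (i : Fin d) : Q i i ≤ 0 := by
  have hsum := hQ.2 i
  rw [← Finset.add_sum_erase _ _ (Finset.mem_univ i)] at hsum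
  have : 0 ≤ ∑ j ∈ Finset.univ.erase i, Q i j :=
    Finset.sum_nonneg fun j hj => hQ.1 i j (Finset.ne_of_mem_erase hj).symm
  linarith

lemma IsGenerator.trace_nonpos {d : ℕ} {Q : Matrix (Fin d) (Fin d) ℝ} (hQ : IsGenerator Q) :
    Q.trace ≤ 0 :=
  Finset.sum_nonpos fun i _ => hQ.apply_self_nonpos i

theorem IsGenerator.im_eq_zero_and_re_nonpos_of_isRoot_charpoly {Q : Matrix (Fin 3) (Fin 3) ℝ}
    (hQ : IsGenerator Q) (h02 : Q 0 2 ≤ Q 1 2) (h20 : Q 2 0 ≤ Q 1 0) {z : ℂ}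
    (hz : (Q.map (Complex.ofReal ·)).charpoly.IsRoot z) : z.im = 0 ∧ z.re ≤ 0 := by
  have hrow (i : Fin 3) : Q i 0 + Q i 1 + Q i 2 = 0 := by
    simpa only [Fin.sum_univ_three] using hQ.2 i
  have q01 := hQ.1 0 1 (by decide)
  have q02 := hQ.1 0 2 (by decide)
  have q20 := hQ.1 2 0 (by decide)
  have q21 := hQ.1 2 1 (by decide)
  set B := tailDiff Q with hB
  obtain ⟨b00, b01, b10, b11⟩ : B 0 0 = Q 1 1 + Q 1 2 - (Q 0 1 + Q 0 2) ∧
      B 0 1 = Q 1 2 - Q 0 2 ∧ B 1 0 = Q 2 1 + Q 2 2 - (Q 1 1 + Q 1 2) ∧ B 1 1 = Q 2 2 - Q 1 2 := by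
    rw [hB, tailDiff_fin_three]
    exact ⟨rfl, rfl, rfl, rfl⟩
  have h01 : 0 ≤ B 0 1 := by linarith
  have h10 : 0 ≤ B 1 0 := by linarith [hrow 1, hrow 2]
  have hdet : 0 ≤ B.det :=
    B.det_fin_two_nonneg_of_le_neg_diag h01 (by linarith [hrow 2]) h10 (by linarith [hrow 2])
  have htr : B.trace ≤ 0 := by
    rw [trace_tailDiff_of_rowSum Q hQ.2, sub_zero]
    exact hQ.trace_nonpos
  have hΔ : 0 ≤ B.discr := B.discr_nonneg_of_mul_nonneg (mul_nonneg h01 h10)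
  have hu : (B.trace + √B.discr) / 2 ≤ 0 := by
    rw [discr_fin_two]
    exact half_add_sqrt_sq_sub_four_mul_nonpos htr hdet
  have hv : (B.trace - √B.discr) / 2 ≤ 0 := by linarith [Real.sqrt_nonneg B.discr]
  rcases eq_or_eq_or_eq_of_roots_eq (roots_charpoly_map_ofReal Q hQ.2 hΔ) hz with rfl | rfl | rfl
  · simp
  · exact ⟨Complex.ofReal_im _, hu⟩
  · exact ⟨Complex.ofReal_im _, hv⟩

/-- the eigenvalues of a monotone `3×3` Markov matrix are real,
given explicitly (besides `1`) by `(tr(M)-1 ± √Δ)/2` with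
`Δ = (tr(M)-1)² - 4·det(M) ≥ 0`; at most one of them is negative, which
happens iff `det(M) < 0`.  Moreover, the eigenvalues of a monotone `3×3`
Markov generator are real and nonpositive. -/
theorem stmt_17 (M : Matrix (Fin 3) (Fin 3) ℝ)
    (hM : IsMarkov M) (hmono : IsMonotone M) :
    (∀ z : ℂ, ((M.map (Complex.ofReal ·)).charpoly).IsRoot z → z.im = 0) ∧
    0 ≤ (Matrix.trace M - 1) ^ 2 - 4 * M.det ∧
    ((M.map (Complex.ofReal ·)).charpoly).roots =
      {(1 : ℂ),
       (((Matrix.trace M - 1 +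
          Real.sqrt ((Matrix.trace M - 1) ^ 2 - 4 * M.det)) / 2 : ℝ) : ℂ),
       (((Matrix.trace M - 1 -
          Real.sqrt ((Matrix.trace M - 1) ^ 2 - 4 * M.det)) / 2 : ℝ) : ℂ)} ∧
    0 ≤ (Matrix.trace M - 1 +
          Real.sqrt ((Matrix.trace M - 1) ^ 2 - 4 * M.det)) / 2 ∧
    ((Matrix.trace M - 1 -
          Real.sqrt ((Matrix.trace M - 1) ^ 2 - 4 * M.det)) / 2 < 0
      ↔ M.det < 0) ∧
    (∀ Q : Matrix (Fin 3) (Fin 3) ℝ, IsGenerator Q →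
      Q 0 2 ≤ Q 1 2 → Q 2 0 ≤ Q 1 0 →
      ∀ z : ℂ, ((Q.map (Complex.ofReal ·)).charpoly).IsRoot z →
        z.im = 0 ∧ z.re ≤ 0) := by
  have hB := hmono.tailDiff_nonneg
  have htr : (tailDiff M).trace = M.trace - 1 := trace_tailDiff_of_rowSum M hM.2
  have hdet : (tailDiff M).det = M.det := by rw [det_eq_mul_det_tailDiff M hM.2, one_mul]
  have hΔ := (tailDiff M).discr_nonneg_of_mul_nonneg (mul_nonneg (hB 0 1) (hB 1 0))
  have hroots := roots_charpoly_map_ofReal M hM.2 hΔ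
  have ht : 0 ≤ M.trace - 1 := htr ▸ Finset.sum_nonneg fun i _ => hB i i
  rw [discr_fin_two, htr, hdet] at hΔ hroots
  rw [Complex.ofReal_one] at hroots
  refine ⟨fun z hz => ?_, hΔ, hroots, by positivity, half_sub_sqrt_sq_sub_four_mul_neg_iff ht,
    fun Q hQ h02 h20 z hz => hQ.im_eq_zero_and_re_nonpos_of_isRoot_charpoly h02 h20 hz⟩
  rcases eq_or_eq_or_eq_of_roots_eq hroots hz with rfl | rfl | rfl <;> simp
end
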